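/- arXiv:2109.06745 — 4 statements merged into one kernel-verified Lean document; each statement's English description precedes it below -/
import Mathlib

section
/- For nonnegative measurable functions f and w on (0,∞), the supremum of ∫₀^∞ g(x)w(x)dx over all nonnegative measurable g satisfying ∫₀^x g ≤ ∫₀^x f for all x > 0 equals ∫₀^∞ f(x)·(sup_{t ≥ x} w(t)) dx. -/
open MeasureTheory Set Filter
open scoped ENNReal

namespace Sinnamon

noncomputable def W (w : ℝ → ℝ≥0∞) (x : ℝ) : ℝ≥0∞ := essSup w (volume.restrict (Ici x))

noncomputable def F (f : ℝ → ℝ≥0∞) (y : ℝ) : ℝ≥0∞ := ∫⁻ t in Ioc 0 y, f t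

noncomputable def Vset (w : ℝ → ℝ≥0∞) (l : ℝ) : Set ℝ :=
  {x : ℝ | 0 < x ∧ ENNReal.ofReal l < W w x}

noncomputable def SUP (f w : ℝ → ℝ≥0∞) : ℝ≥0∞ :=
  ⨆ (g : ℝ → ℝ≥0∞) (_ : Measurable g)
      (_ : ∀ x : ℝ, 0 < x → (∫⁻ t in Ioc 0 x, g t) ≤ ∫⁻ t in Ioc 0 x, f t),
      ∫⁻ x in Ioi (0:ℝ), g x * w x

variable {f w : ℝ → ℝ≥0∞}

lemma W_anti : Antitone (W w) := fun _ _ hxy =>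
  essSup_mono_measure
    ((Measure.restrict_mono (Ici_subset_Ici.2 hxy) le_rfl).absolutelyContinuous)

lemma W_meas : Measurable (W w) := (W_anti (w := w)).measurable

lemma F_mono : Monotone (F f) := fun _ _ h => lintegral_mono_set (Ioc_subset_Ioc_right h)

lemma Vset_subset (l : ℝ) : Vset w l ⊆ Ioi 0 := fun _ hx => hx.1

lemma Vset_lower {l : ℝ} : ∀ x ∈ Vset w l, ∀ y : ℝ, 0 < y → y ≤ x → y ∈ Vset w l :=
  fun _ hx _ hy hyx => ⟨hy, lt_of_lt_of_le hx.2 (W_anti hyx)⟩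

lemma Vset_mono {l l' : ℝ} (h : l ≤ l') : Vset w l' ⊆ Vset w l :=
  fun _ hx => ⟨hx.1, lt_of_le_of_lt (ENNReal.ofReal_le_ofReal h) hx.2⟩

lemma Vset_meas (l : ℝ) : MeasurableSet (Vset w l) := by
  have : Vset w l = Ioi 0 ∩ (W w) ⁻¹' (Ioi (ENNReal.ofReal l)) := rfl
  rw [this]
  exact measurableSet_Ioi.inter (W_meas measurableSet_Ioi)

lemma lint_iUnion_mono {A : ℕ → Set ℝ} (hA : Monotone A) (hAm : ∀ n, MeasurableSet (A n))
    {h : ℝ → ℝ≥0∞} (hh : Measurable h) :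
    ∫⁻ x in ⋃ n, A n, h x = ⨆ n, ∫⁻ x in A n, h x := by
  rw [← lintegral_indicator (MeasurableSet.iUnion hAm)]
  have hpt : ∀ x, (⋃ n, A n).indicator h x = ⨆ n, (A n).indicator h x := by
    intro x
    by_cases hx : x ∈ ⋃ n, A n
    · obtain ⟨n, hn⟩ := mem_iUnion.1 hx
      rw [indicator_of_mem hx]
      refine le_antisymm ?_ (iSup_le fun m => indicator_le_self _ _ x)
      exact le_trans (le_of_eq (indicator_of_mem hn h).symm) (le_iSup (fun n => (A n).indicator h x) n)
    · rw [indicator_of_notMem hx]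
      symm
      simp only [ENNReal.iSup_eq_zero]
      intro n
      exact indicator_of_notMem (fun hmem => hx (mem_iUnion.2 ⟨n, hmem⟩)) h
  rw [lintegral_congr hpt,
    lintegral_iSup (fun n => hh.indicator (hAm n))
      (fun n m hnm => indicator_le_indicator_of_subset (hA hnm) (fun _ => zero_le))]
  exact iSup_congr fun n => lintegral_indicator (hAm n) h

lemma seqV {V : Set ℝ} (hVsub : V ⊆ Ioi 0)
    (hlow : ∀ x ∈ V, ∀ y : ℝ, 0 < y → y ≤ x → y ∈ V) (hne : V.Nonempty) :
    ∃ u : ℕ → ℝ, Monotone u ∧ (∀ n, u n ∈ V) ∧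
      ∀ h : ℝ → ℝ≥0∞, Measurable h →
        ∫⁻ x in V, h x = ⨆ n, ∫⁻ x in Ioc 0 (u n), h x := by
  obtain ⟨v, hv⟩ := hne
  have hv0 : 0 < v := hVsub hv
  obtain ⟨r0, hr00, hr0v⟩ := exists_rat_btwn hv0
  have hr0V : (r0 : ℝ) ∈ V := hlow v hv _ (by exact_mod_cast hr00) hr0v.le
  have hcount : (V ∩ Set.range ((↑) : ℚ → ℝ)).Countable :=
    (Set.countable_range _).mono inter_subset_right
  have hnem : (V ∩ Set.range ((↑) : ℚ → ℝ)).Nonempty := ⟨(r0 : ℝ), hr0V, ⟨r0, rfl⟩⟩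
  obtain ⟨e, he⟩ := hcount.exists_eq_range hnem
  have heV : ∀ k, e k ∈ V := fun k => by
    have : e k ∈ V ∩ Set.range ((↑) : ℚ → ℝ) := he ▸ ⟨k, rfl⟩
    exact this.1
  set u : ℕ → ℝ := fun n => (Finset.range (n+1)).sup' Finset.nonempty_range_add_one e with hu
  have humem : ∀ n, u n ∈ V := by
    intro n
    refine Finset.sup'_mem V ?_ _ _ _ (fun k _ => heV k)
    intro a ha b hb
    rcases max_choice a b with h | h <;> rw [h] <;> assumption
  have humono : Monotone u := by
    intro n m hnm
    refine Finset.sup'_le _ _ fun k hk => Finset.le_sup' e ?_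
    exact Finset.mem_range.2 (lt_of_lt_of_le (Finset.mem_range.1 hk) (by omega))
  have hle : ∀ k, e k ≤ u k := fun k => Finset.le_sup' e (Finset.self_mem_range_succ k)
  refine ⟨u, humono, humem, ?_⟩
  intro h hh
  have hIoc : ∀ n, Ioc (0:ℝ) (u n) ⊆ V := fun n y hy => hlow _ (humem n) _ hy.1 hy.2
  apply le_antisymm
  · set K := ⋃ n, Ioc (0:ℝ) (u n) with hK
    set B := V \ K with hB
    have hBsub : B.Subsingleton := by
      intro a ha b hb
      by_contra hab
      have key : ∀ p q : ℝ, p ∈ B → q ∈ B → p < q → False := by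
        intro p q hp hq hpq
        obtain ⟨r, hr1, hr2⟩ := exists_rat_btwn hpq
        have hp0 : 0 < p := hVsub hp.1
        have hrV : (r : ℝ) ∈ V := hlow q hq.1 _ (lt_trans hp0 hr1) hr2.le
        have : (r : ℝ) ∈ V ∩ Set.range ((↑) : ℚ → ℝ) := ⟨hrV, ⟨r, rfl⟩⟩
        rw [he] at this
        obtain ⟨k, hk⟩ := this
        exact hp.2 (mem_iUnion.2 ⟨k, hp0, le_trans hr1.le (hk ▸ hle k)⟩)
      rcases Ne.lt_or_gt hab with hlt | hlt
      · exact key a b ha hb hlt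
      · exact key b a hb ha hlt
    have hVsub2 : V ⊆ K ∪ B := fun x hx => by
      by_cases hxK : x ∈ K
      · exact Or.inl hxK
      · exact Or.inr ⟨hx, hxK⟩
    calc ∫⁻ x in V, h x ≤ ∫⁻ x in K ∪ B, h x := lintegral_mono_set hVsub2
      _ ≤ (∫⁻ x in K, h x) + ∫⁻ x in B, h x := lintegral_union_le _ _ _
      _ = ∫⁻ x in K, h x := by
          rw [setLIntegral_measure_zero _ _ (hBsub.measure_zero volume), add_zero]
      _ = ⨆ n, ∫⁻ x in Ioc 0 (u n), h x := by
          refine lint_iUnion_mono ?_ (fun n => measurableSet_Ioc) hh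
          exact fun n m hnm => Ioc_subset_Ioc_right (humono hnm)
  · exact iSup_le fun n => lintegral_mono_set (hIoc n)

lemma low {V : Set ℝ} (hVsub : V ⊆ Ioi 0)
    (hlow : ∀ x ∈ V, ∀ y : ℝ, 0 < y → y ≤ x → y ∈ V)
    {g : ℝ → ℝ≥0∞} (hg : Measurable g) (hf : Measurable f)
    (hadm : ∀ x : ℝ, 0 < x → (∫⁻ t in Ioc 0 x, g t) ≤ ∫⁻ t in Ioc 0 x, f t) :
    ∫⁻ x in V, g x ≤ ∫⁻ x in V, f x := by
  rcases V.eq_empty_or_nonempty with rfl | hne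
  · simp
  obtain ⟨u, _, hmem, hkey⟩ := seqV hVsub hlow hne
  rw [hkey g hg, hkey f hf]
  exact iSup_mono fun n => hadm (u n) (hVsub (hmem n))

lemma vol_aux (c : ℝ≥0∞) : volume {l : ℝ | 0 < l ∧ ENNReal.ofReal l < c} = c := by
  rcases eq_or_ne c ⊤ with rfl | hc
  · have : {l : ℝ | 0 < l ∧ ENNReal.ofReal l < ⊤} = Ioi 0 := by
      ext l; simp [ENNReal.ofReal_lt_top]
    rw [this, Real.volume_Ioi]
  · have : {l : ℝ | 0 < l ∧ ENNReal.ofReal l < c} = Ioo 0 c.toReal := by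
      ext l
      simp only [mem_setOf_eq, mem_Ioo]
      exact and_congr_right fun h1 => ENNReal.ofReal_lt_iff_lt_toReal h1.le hc
    rw [this, Real.volume_Ioo, sub_zero, ENNReal.ofReal_toReal hc]

lemma tonelli (hw : Measurable w) {h : ℝ → ℝ≥0∞} (hh : Measurable h) :
    ∫⁻ x in Ioi (0:ℝ), h x * W w x
      = ∫⁻ l in Ioi (0:ℝ), ∫⁻ x in Vset w l, h x := by
  set S : Set (ℝ × ℝ) := {p : ℝ × ℝ | ENNReal.ofReal p.2 < W w p.1} with hS
  have hSmeas : MeasurableSet S :=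
    measurableSet_lt (ENNReal.measurable_ofReal.comp measurable_snd)
      ((W_meas (w := w)).comp measurable_fst)
  set Φ : ℝ → ℝ → ℝ≥0∞ := fun x l => h x * S.indicator 1 (x, l) with hΦ
  have hΦmeas : Measurable (Function.uncurry Φ) := by
    have : Function.uncurry Φ = fun p : ℝ × ℝ => h p.1 * S.indicator 1 p := by
      funext p; simp [Function.uncurry, hΦ]
    rw [this]
    exact (hh.comp measurable_fst).mul (measurable_one.indicator hSmeas)
  have hleft : ∀ x : ℝ, ∫⁻ l in Ioi (0:ℝ), Φ x l = h x * W w x := by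
    intro x
    have hpt : ∀ l : ℝ, Φ x l = h x * ({l : ℝ | ENNReal.ofReal l < W w x}.indicator 1 l) := by
      intro l
      by_cases hl : ENNReal.ofReal l < W w x <;>
        simp [hΦ, hS, Set.indicator_apply, hl]
    have hm : MeasurableSet {l : ℝ | ENNReal.ofReal l < W w x} :=
      measurableSet_lt ENNReal.measurable_ofReal measurable_const
    rw [lintegral_congr hpt, lintegral_const_mul _ (measurable_one.indicator hm),
      lintegral_indicator_one hm, Measure.restrict_apply hm]
    have : {l : ℝ | ENNReal.ofReal l < W w x} ∩ Ioi 0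
        = {l : ℝ | 0 < l ∧ ENNReal.ofReal l < W w x} := by
      ext l; simp [and_comm]
    rw [this, vol_aux]
  have hright : ∀ l : ℝ, ∫⁻ x in Ioi (0:ℝ), Φ x l = ∫⁻ x in Vset w l, h x := by
    intro l
    have hmeasx : MeasurableSet {x : ℝ | ENNReal.ofReal l < W w x} :=
      (W_meas (w := w)) measurableSet_Ioi
    have hpt : ∀ x : ℝ, Φ x l = {x : ℝ | ENNReal.ofReal l < W w x}.indicator h x := by
      intro x
      by_cases hx : ENNReal.ofReal l < W w x <;>
        simp [hΦ, hS, Set.indicator_apply, hx]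
    rw [lintegral_congr hpt, lintegral_indicator hmeasx,
      Measure.restrict_restrict hmeasx]
    congr 1
    congr 1
    ext x; simp [Vset, and_comm]
  calc ∫⁻ x in Ioi (0:ℝ), h x * W w x
      = ∫⁻ x in Ioi (0:ℝ), ∫⁻ l in Ioi (0:ℝ), Φ x l := by
        exact (lintegral_congr hleft).symm
    _ = ∫⁻ l in Ioi (0:ℝ), ∫⁻ x in Ioi (0:ℝ), Φ x l := by
        exact lintegral_lintegral_swap hΦmeas.aemeasurable
    _ = ∫⁻ l in Ioi (0:ℝ), ∫⁻ x in Vset w l, h x := lintegral_congr hright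


lemma ae_w_le (hw : Measurable w) : ∀ᵐ x : ℝ, w x ≤ W w x := by
  have key : ∀ q : ℚ,
      volume {x : ℝ | W w x < ENNReal.ofReal q ∧ ENNReal.ofReal q < w x} = 0 := by
    intro q
    set c := ENNReal.ofReal (q : ℝ) with hc
    set U := {x : ℝ | W w x < c} with hU
    have hupper : ∀ x ∈ U, ∀ y : ℝ, x ≤ y → y ∈ U := fun x hx y hxy =>
      lt_of_le_of_lt (W_anti hxy) hx
    have hwmeas : MeasurableSet {t : ℝ | c < w t} := hw measurableSet_Ioi
    have hr : ∀ r : ℝ, r ∈ U → volume ({t : ℝ | c < w t} ∩ Ici r) = 0 := by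
      intro r hrU
      have h1 : ∀ᵐ t ∂(volume.restrict (Ici r)), w t ≤ W w r := ENNReal.ae_le_essSup w
      have h2 : (volume.restrict (Ici r)) {t : ℝ | ¬ w t ≤ W w r} = 0 := ae_iff.1 h1
      have h3 : (volume.restrict (Ici r)) {t : ℝ | c < w t} = 0 := by
        refine measure_mono_null (fun t ht => ?_) h2
        exact not_le.2 (lt_trans hrU ht)
      rwa [Measure.restrict_apply hwmeas] at h3
    have hsub : {x : ℝ | W w x < c ∧ c < w x} ⊆
        {x ∈ U | ∀ r : ℚ, (r:ℝ) ∈ U → ¬ (r:ℝ) ≤ x}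
          ∪ ⋃ r : ℚ, ⋃ (_ : (r:ℝ) ∈ U), ({t : ℝ | c < w t} ∩ Ici (r:ℝ)) := by
      intro x hx
      by_cases hex : ∃ r : ℚ, (r:ℝ) ∈ U ∧ (r:ℝ) ≤ x
      · obtain ⟨r, hrU, hrx⟩ := hex
        exact Or.inr (mem_iUnion.2 ⟨r, mem_iUnion.2 ⟨hrU, hx.2, hrx⟩⟩)
      · push_neg at hex
        exact Or.inl ⟨hx.1, fun r hrU => not_le.2 (hex r hrU)⟩
    refine measure_mono_null hsub (measure_union_null ?_ ?_)
    · have hss : {x ∈ U | ∀ r : ℚ, (r:ℝ) ∈ U → ¬ (r:ℝ) ≤ x}.Subsingleton := by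
        intro a ha b hb
        by_contra hab
        have key2 : ∀ p s : ℝ, p ∈ {x ∈ U | ∀ r : ℚ, (r:ℝ) ∈ U → ¬ (r:ℝ) ≤ x} →
            s ∈ {x ∈ U | ∀ r : ℚ, (r:ℝ) ∈ U → ¬ (r:ℝ) ≤ x} → p < s → False := by
          intro p s hp hs hps
          obtain ⟨r, hr1, hr2⟩ := exists_rat_btwn hps
          exact hs.2 r (hupper p hp.1 r hr1.le) hr2.le
        rcases Ne.lt_or_gt hab with hlt | hlt
        · exact key2 a b ha hb hlt
        · exact key2 b a hb ha hlt
      exact hss.measure_zero volume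
    · exact measure_iUnion_null fun r => measure_iUnion_null fun hrU => hr r hrU
  have hsub2 : {x : ℝ | ¬ w x ≤ W w x} ⊆
      ⋃ q : ℚ, {x : ℝ | W w x < ENNReal.ofReal q ∧ ENNReal.ofReal q < w x} := by
    intro x hx
    rw [mem_setOf_eq, not_le] at hx
    obtain ⟨q, _, h1, h2⟩ := ENNReal.lt_iff_exists_rat_btwn.1 hx
    refine mem_iUnion.2 ⟨q, ?_, ?_⟩
    · simpa [ENNReal.ofReal] using h1
    · simpa [ENNReal.ofReal] using h2
  rw [ae_iff]
  exact measure_mono_null hsub2 (measure_iUnion_null key)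

lemma tele (φ : ℕ → ℝ≥0∞) (hφ : ∀ j, φ (j+1) ≤ φ j) :
    ∀ N k, k ≤ N → ∑ j ∈ Finset.Ico k N, (φ j - φ (j+1)) = φ k - φ N := by
  have hanti : Antitone φ := antitone_nat_of_succ_le hφ
  intro N
  induction N with
  | zero => intro k hk; interval_cases k; simp
  | succ N ih =>
    intro k hk
    rcases Nat.lt_or_ge k (N+1) with h | h
    · have hkN : k ≤ N := by omega
      rw [Finset.sum_Ico_succ_top hkN, ih k hkN]
      exact tsub_add_tsub_cancel (hanti hkN) (hφ N)
    · have : k = N + 1 := by omega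
      subst this; simp


lemma construction (hf : Measurable f) (hw : Measurable w) {δ : ℝ} (hδ : 0 < δ) (N : ℕ)
    (x : ℕ → ℝ) (hxpos : ∀ j, j < N → 0 < x j)
    (hanti : ∀ j, j + 1 < N → x (j+1) ≤ x j)
    (hxW : ∀ j, j < N → ENNReal.ofReal (((j:ℝ)+1) * δ) < W w (x j)) :
    ∃ g : ℝ → ℝ≥0∞, Measurable g ∧
      (∀ y : ℝ, 0 < y → (∫⁻ t in Ioc 0 y, g t) ≤ ∫⁻ t in Ioc 0 y, f t) ∧
      ∑ j ∈ Finset.range N, ENNReal.ofReal δ * F f (x j) ≤ ∫⁻ t in Ioi (0:ℝ), g t * w t := by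
  classical
  set φ : ℕ → ℝ≥0∞ := fun j => if j < N then F f (x j) else 0 with hφdef
  have hφsucc : ∀ j, φ (j+1) ≤ φ j := by
    intro j
    by_cases h1 : j + 1 < N
    · have h2 : j < N := by omega
      simp only [hφdef, if_pos h1, if_pos h2]
      exact F_mono (hanti j h1)
    · simp [hφdef, h1]
  set Δ : ℕ → ℝ≥0∞ := fun j => φ j - φ (j+1) with hΔdef
  set q : ℕ → ℝ≥0∞ := fun j => ENNReal.ofReal (((j:ℝ)+1) * δ) with hqdef
  set A : ℕ → Set ℝ := fun j => Ici (x j) ∩ {t : ℝ | q j < w t} with hAdef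
  have hAmeas : ∀ j, MeasurableSet (A j) := fun j =>
    measurableSet_Ici.inter (hw measurableSet_Ioi)
  have hApos : ∀ j, j < N → 0 < volume (A j) := by
    intro j hj
    by_contra hcon
    push_neg at hcon
    have hA0 : volume (A j) = 0 := le_antisymm hcon (zero_le)
    have : W w (x j) ≤ q j := by
      refine essSup_le_of_ae_le _ ?_
      rw [EventuallyLE, ae_iff]
      have : {t : ℝ | ¬ w t ≤ q j} ∩ Ici (x j) = A j := by
        ext t; simp [hAdef, and_comm, not_le]
      have hm2 : MeasurableSet {t : ℝ | ¬ w t ≤ q j} := by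
        simp only [not_le]
        exact hw measurableSet_Ioi
      rw [Measure.restrict_apply hm2, this, hA0]
    exact absurd (hxW j hj) (not_lt.2 this)
  have hsel : ∀ j, ∃ n : ℕ, j < N → 0 < volume (A j ∩ Iic (n:ℝ)) := by
    intro j
    by_cases hj : j < N
    · have hcover : A j = ⋃ n : ℕ, A j ∩ Iic (n:ℝ) := by
        ext t
        simp only [mem_iUnion, mem_inter_iff, mem_Iic]
        constructor
        · intro ht
          obtain ⟨n, hn⟩ := exists_nat_ge t
          exact ⟨n, ht, hn⟩
        · rintro ⟨n, hn, _⟩; exact hn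
      by_contra hcon
      push_neg at hcon
      have : ∀ n : ℕ, volume (A j ∩ Iic (n:ℝ)) = 0 := fun n =>
        le_antisymm (hcon n).2 (zero_le)
      have : volume (A j) = 0 := by
        rw [hcover]; exact measure_iUnion_null this
      exact absurd this (hApos j hj).ne'
    · exact ⟨0, fun h => absurd h hj⟩
  choose T hT using hsel
  set E : ℕ → Set ℝ := fun j => A j ∩ Iic ((T j : ℝ)) with hEdef
  have hEmeas : ∀ j, MeasurableSet (E j) := fun j => (hAmeas j).inter measurableSet_Iic
  have hE0 : ∀ j, j < N → volume (E j) ≠ 0 := fun j hj => (hT j hj).ne'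
  have hEtop : ∀ j, j < N → volume (E j) ≠ ⊤ := by
    intro j hj
    have hsub : E j ⊆ Icc (x j) (T j : ℝ) := fun t ht => ⟨ht.1.1, ht.2⟩
    exact ((measure_mono hsub).trans_lt (by rw [Real.volume_Icc]; exact ENNReal.ofReal_lt_top)).ne
  set c : ℕ → ℝ≥0∞ := fun j => Δ j / volume (E j) with hcdef
  have hcE : ∀ j, j < N → c j * volume (E j) = Δ j := fun j hj =>
    ENNReal.div_mul_cancel (hE0 j hj) (hEtop j hj)
  set g : ℝ → ℝ≥0∞ := fun t => ∑ j ∈ Finset.range N, (E j).indicator (fun _ => c j) t with hgdef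
  have hgmeas : Measurable g :=
    Finset.measurable_sum _ (fun j _ => measurable_const.indicator (hEmeas j))
  have hwsub : ∀ j, j < N → E j ⊆ Ioi (0:ℝ) := fun j hj t ht =>
    lt_of_lt_of_le (hxpos j hj) ht.1.1
  refine ⟨g, hgmeas, ?_, ?_⟩
  · -- admissibility
    intro y hy
    have hsum : ∫⁻ t in Ioc 0 y, g t
        = ∑ j ∈ Finset.range N, c j * volume (E j ∩ Ioc 0 y) := by
      rw [hgdef]
      rw [lintegral_finset_sum _ (fun j _ => measurable_const.indicator (hEmeas j))]
      refine Finset.sum_congr rfl fun j _ => ?_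
      rw [lintegral_indicator (hEmeas j), Measure.restrict_restrict (hEmeas j),
        setLIntegral_const]
    rw [hsum]
    have hbound : ∑ j ∈ Finset.range N, c j * volume (E j ∩ Ioc 0 y)
        ≤ ∑ j ∈ Finset.range N, (if x j < y then Δ j else 0) := by
      refine Finset.sum_le_sum fun j hj => ?_
      have hjN := Finset.mem_range.1 hj
      by_cases hxy : x j < y
      · rw [if_pos hxy]
        calc c j * volume (E j ∩ Ioc 0 y) ≤ c j * volume (E j) :=
              mul_le_mul_right (measure_mono inter_subset_left) _
          _ = Δ j := hcE j hjN
      · rw [if_neg hxy]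
        have hnull : volume (E j ∩ Ioc 0 y) = 0 := by
          refine measure_mono_null (fun t ht => ?_) (Real.volume_singleton (a := y))
          have h1 : x j ≤ t := ht.1.1.1
          have h2 : t ≤ y := ht.2.2
          have h3 : y ≤ x j := not_lt.1 hxy
          have : t = y := le_antisymm h2 (le_trans h3 h1)
          simp [this]
        rw [hnull, mul_zero]
    refine le_trans hbound ?_
    rw [← Finset.sum_filter]
    by_cases hex : ∃ j, j < N ∧ x j < y
    · have hj₀N := (Nat.find_spec hex).1
      have hj₀y := (Nat.find_spec hex).2
      have hsubset : (Finset.range N).filter (fun j => x j < y) ⊆ Finset.Ico (Nat.find hex) N := by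
        intro j hj
        rw [Finset.mem_filter, Finset.mem_range] at hj
        exact Finset.mem_Ico.2 ⟨Nat.find_le ⟨hj.1, hj.2⟩, hj.1⟩
      calc ∑ j ∈ (Finset.range N).filter (fun j => x j < y), Δ j
          ≤ ∑ j ∈ Finset.Ico (Nat.find hex) N, Δ j :=
            Finset.sum_le_sum_of_subset hsubset
        _ = φ (Nat.find hex) - φ N := tele φ hφsucc N _ hj₀N.le
        _ ≤ φ (Nat.find hex) := tsub_le_self
        _ = F f (x (Nat.find hex)) := by simp [hφdef, if_pos hj₀N]
        _ ≤ F f y := F_mono hj₀y.le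
    · push_neg at hex
      have hempty : (Finset.range N).filter (fun j => x j < y) = ∅ :=
        Finset.filter_eq_empty_iff.2 fun {j} hj => not_lt.2 (hex j (Finset.mem_range.1 hj))
      rw [hempty, Finset.sum_empty]
      exact zero_le
  · -- value bound
    have hptmul : ∀ t, g t * w t
        = ∑ j ∈ Finset.range N, (E j).indicator (fun s => c j * w s) t := by
      intro t
      rw [hgdef, Finset.sum_mul]
      refine Finset.sum_congr rfl fun j _ => ?_
      by_cases ht : t ∈ E j <;> simp [Set.indicator_apply, ht]
    have hval : ∫⁻ t in Ioi (0:ℝ), g t * w t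
        = ∑ j ∈ Finset.range N, ∫⁻ t in Ioi (0:ℝ), (E j).indicator (fun s => c j * w s) t := by
      rw [lintegral_congr hptmul]
      exact lintegral_finset_sum _ (fun j _ => (measurable_const.mul hw).indicator (hEmeas j))
    have hterm : ∀ j, j < N →
        q j * Δ j ≤ ∫⁻ t in Ioi (0:ℝ), (E j).indicator (fun s => c j * w s) t := by
      intro j hj
      rw [lintegral_indicator (hEmeas j), Measure.restrict_restrict (hEmeas j),
        inter_eq_left.2 (hwsub j hj)]
      calc q j * Δ j = (c j * q j) * volume (E j) := by rw [← hcE j hj]; ring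
        _ = ∫⁻ _ in E j, c j * q j := (setLIntegral_const _ _).symm
        _ ≤ ∫⁻ t in E j, c j * w t := by
            refine setLIntegral_mono' (hEmeas j) fun t ht => ?_
            exact mul_le_mul_right ht.1.2.le _
    have h1 : ∀ j : ℕ, q j = ((j:ℝ≥0∞)+1) * ENNReal.ofReal δ := by
      intro j
      calc q j = ENNReal.ofReal ((j:ℝ)+1) * ENNReal.ofReal δ := by
            rw [hqdef]
            exact ENNReal.ofReal_mul (by positivity)
        _ = ((j:ℝ≥0∞)+1) * ENNReal.ofReal δ := by
            rw [show ((j:ℝ)+1) = ((j+1:ℕ):ℝ) by push_cast; ring, ENNReal.ofReal_natCast]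
            push_cast
            ring
    have hswap : ∑ j ∈ Finset.range N, q j * Δ j
        = ENNReal.ofReal δ * ∑ j ∈ Finset.range N, ((j:ℝ≥0∞)+1) * Δ j := by
      rw [Finset.mul_sum]
      refine Finset.sum_congr rfl fun j _ => by rw [h1 j]; ring
    have hdouble : ∑ j ∈ Finset.range N, ((j:ℝ≥0∞)+1) * Δ j
        = ∑ i ∈ Finset.range N, φ i := by
      have hrepr : ∀ j ∈ Finset.range N, ((j:ℝ≥0∞)+1) * Δ j
          = ∑ _i ∈ Finset.range (j+1), Δ j := by
        intro j _
        rw [Finset.sum_const, Finset.card_range, nsmul_eq_mul]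
        push_cast
        ring
      rw [Finset.sum_congr rfl hrepr,
        Finset.sum_comm' (s := Finset.range N) (t := fun j => Finset.range (j+1))
          (t' := Finset.range N) (s' := fun i => Finset.Ico i N)
          (by intro j i; simp only [Finset.mem_range, Finset.mem_Ico]; omega)]
      refine Finset.sum_congr rfl fun i hi => ?_
      rw [tele φ hφsucc N i (Finset.mem_range.1 hi).le]
      have : φ N = 0 := by simp [hφdef]
      rw [this, tsub_zero]
    calc ∑ j ∈ Finset.range N, ENNReal.ofReal δ * F f (x j)
        = ENNReal.ofReal δ * ∑ i ∈ Finset.range N, φ i := by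
          rw [Finset.mul_sum]
          refine Finset.sum_congr rfl fun j hj => ?_
          simp [hφdef, Finset.mem_range.1 hj]
      _ = ∑ j ∈ Finset.range N, q j * Δ j := by rw [hswap, hdouble]
      _ ≤ ∑ j ∈ Finset.range N, ∫⁻ t in Ioi (0:ℝ), (E j).indicator (fun s => c j * w s) t :=
          Finset.sum_le_sum fun j hj => hterm j (Finset.mem_range.1 hj)
      _ = ∫⁻ t in Ioi (0:ℝ), g t * w t := hval.symm


lemma step (hf : Measurable f) (hw : Measurable w) {δ : ℝ} (hδ : 0 < δ) (N : ℕ) :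
    ∑ j ∈ Finset.range N, ENNReal.ofReal δ * (∫⁻ t in Vset w (((j:ℝ)+1) * δ), f t)
      ≤ SUP f w := by
  classical
  induction N with
  | zero => simp
  | succ N ih =>
    by_cases hne : (Vset w (((N:ℝ)+1) * δ)).Nonempty
    · have hVne : ∀ j, j ≤ N → (Vset w (((j:ℝ)+1) * δ)).Nonempty := by
        intro j hj
        refine hne.mono (Vset_mono ?_)
        have h1 : ((j:ℝ)+1) ≤ ((N:ℝ)+1) := by
          have : (j:ℝ) ≤ (N:ℝ) := by exact_mod_cast hj
          linarith
        nlinarith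
      have H : ∀ j, ∃ u : ℕ → ℝ, j ≤ N → (Monotone u ∧
          (∀ n, u n ∈ Vset w (((j:ℝ)+1)*δ)) ∧
          (∫⁻ t in Vset w (((j:ℝ)+1)*δ), f t = ⨆ n, F f (u n))) := by
        intro j
        by_cases hj : j ≤ N
        · obtain ⟨u, hmono, hmem, hkey⟩ := seqV (Vset_subset _) Vset_lower (hVne j hj)
          exact ⟨u, fun _ => ⟨hmono, hmem, hkey f hf⟩⟩
        · exact ⟨fun _ => 0, fun h => absurd h hj⟩
      choose u hu using H
      set X : ℕ → ℕ → ℝ := fun n j => if h : j ≤ N then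
          (Finset.Icc j N).sup' (Finset.nonempty_Icc.2 h) (fun k => u k n) else 0 with hX
      have hXmem : ∀ n j, j ≤ N → X n j ∈ Vset w (((j:ℝ)+1)*δ) := by
        intro n j hj
        rw [hX]
        simp only [dif_pos hj]
        refine Finset.sup'_mem (Vset w (((j:ℝ)+1)*δ)) ?_ _ _ _ ?_
        · intro a ha b hb
          rcases max_choice a b with h | h <;> rw [h] <;> assumption
        · intro k hk
          rw [Finset.mem_Icc] at hk
          refine Vset_mono ?_ ((hu k hk.2).2.1 n)
          have h1 : ((j:ℝ)+1) ≤ ((k:ℝ)+1) := by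
            have : (j:ℝ) ≤ (k:ℝ) := by exact_mod_cast hk.1
            linarith
          nlinarith
      have hXanti : ∀ n j, j + 1 ≤ N → X n (j+1) ≤ X n j := by
        intro n j hj
        rw [hX]
        simp only [dif_pos hj, dif_pos (Nat.le_of_succ_le hj)]
        refine Finset.sup'_le _ _ fun k hk => ?_
        refine Finset.le_sup' (fun k => u k n) ?_
        rw [Finset.mem_Icc] at hk ⊢
        omega
      have hXmono : ∀ j, Monotone (fun n => X n j) := by
        intro j
        by_cases hj : j ≤ N
        · intro n m hnm
          simp only [hX, dif_pos hj]
          refine Finset.sup'_le _ _ fun k hk => ?_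
          exact le_trans ((hu k (Finset.mem_Icc.1 hk).2).1 hnm)
            (Finset.le_sup' (fun k => u k m) hk)
        · simp only [hX, dif_neg hj]
          exact monotone_const
      have hXG : ∀ j, j ≤ N →
          (∫⁻ t in Vset w (((j:ℝ)+1)*δ), f t) = ⨆ n, F f (X n j) := by
        intro j hj
        apply le_antisymm
        · rw [(hu j hj).2.2]
          refine iSup_mono fun n => F_mono ?_
          rw [hX]
          simp only [dif_pos hj]
          exact Finset.le_sup' (fun k => u k n) (Finset.mem_Icc.2 ⟨le_refl j, hj⟩)
        · refine iSup_le fun n => ?_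
          refine lintegral_mono_set fun t ht => ?_
          exact Vset_lower _ (hXmem n j hj) t ht.1 ht.2
      calc ∑ j ∈ Finset.range (N+1), ENNReal.ofReal δ * (∫⁻ t in Vset w (((j:ℝ)+1)*δ), f t)
          = ∑ j ∈ Finset.range (N+1), ⨆ n, ENNReal.ofReal δ * F f (X n j) := by
            refine Finset.sum_congr rfl fun j hj => ?_
            rw [hXG j (Nat.lt_succ_iff.1 (Finset.mem_range.1 hj)), ENNReal.mul_iSup]
        _ = ⨆ n, ∑ j ∈ Finset.range (N+1), ENNReal.ofReal δ * F f (X n j) := by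
            refine ENNReal.finsetSum_iSup_of_monotone fun j => ?_
            intro n m hnm
            exact mul_le_mul_right (F_mono (hXmono j hnm)) _
        _ ≤ SUP f w := by
            refine iSup_le fun n => ?_
            obtain ⟨g, hgmeas, hgadm, hgval⟩ := construction hf hw hδ (N+1) (fun j => X n j)
              (fun j hj => Vset_subset _ (hXmem n j (Nat.lt_succ_iff.1 hj)))
              (fun j hj => hXanti n j (Nat.lt_succ_iff.1 hj))
              (fun j hj => (hXmem n j (Nat.lt_succ_iff.1 hj)).2)
            refine le_trans hgval ?_
            exact le_iSup_of_le g (le_iSup_of_le hgmeas (le_iSup_of_le hgadm le_rfl))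
    · rw [Finset.sum_range_succ, not_nonempty_iff_eq_empty.1 hne]
      simp only [Measure.restrict_empty, lintegral_zero_measure, mul_zero, add_zero]
      exact ih

noncomputable def Gf (f w : ℝ → ℝ≥0∞) (l : ℝ) : ℝ≥0∞ := ∫⁻ t in Vset w l, f t

lemma RC (hf : Measurable f) (l : ℝ) :
    Gf f w l = ⨆ m : ℕ, Gf f w (l + ((2:ℝ)^m)⁻¹) := by
  have hAmono : Monotone (fun m : ℕ => Vset w (l + ((2:ℝ)^m)⁻¹)) := by
    intro n m hnm
    refine Vset_mono (by gcongr <;> norm_num)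
  have hUnion : (⋃ m : ℕ, Vset w (l + ((2:ℝ)^m)⁻¹)) = Vset w l := by
    apply Subset.antisymm
    · refine iUnion_subset fun m => Vset_mono ?_
      have : (0:ℝ) < ((2:ℝ)^m)⁻¹ := by positivity
      linarith
    · intro x hx
      have h0 : Tendsto (fun m : ℕ => ((2:ℝ)⁻¹)^m) atTop (nhds 0) :=
        tendsto_pow_atTop_nhds_zero_of_lt_one (by norm_num) (by norm_num)
      have h1 : Tendsto (fun m : ℕ => l + ((2:ℝ)^m)⁻¹) atTop (nhds l) := by
        have := tendsto_const_nhds (x := l) (f := atTop (α := ℕ)) |>.add h0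
        simpa [← inv_pow] using this
      have htend : Tendsto (fun m : ℕ => ENNReal.ofReal (l + ((2:ℝ)^m)⁻¹)) atTop
          (nhds (ENNReal.ofReal l)) := (ENNReal.continuous_ofReal.tendsto l).comp h1
      obtain ⟨m, hm⟩ := (htend.eventually_lt_const hx.2).exists
      exact mem_iUnion.2 ⟨m, hx.1, hm⟩
  rw [Gf, ← hUnion, lint_iUnion_mono hAmono (fun m => Vset_meas _) hf]
  rfl

lemma ge_dir (hf : Measurable f) (hw : Measurable w) :
    ∫⁻ l in Ioi (0:ℝ), Gf f w l ≤ SUP f w := by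
  classical
  set δ : ℕ → ℝ := fun n => ((2:ℝ)^n)⁻¹ with hδdef
  have hδpos : ∀ n, 0 < δ n := fun n => by rw [hδdef]; positivity
  have hδanti : ∀ {n m : ℕ}, n ≤ m → δ m ≤ δ n := by
    intro n m hnm
    simp only [hδdef]
    exact inv_anti₀ (by positivity)
      (pow_le_pow_right₀ (by norm_num : (1:ℝ) ≤ 2) hnm)
  set h : ℕ → ℝ → ℝ≥0∞ := fun n l => ∑ j ∈ Finset.range (n * 2^n),
      (Ioc ((j:ℝ) * δ n) (((j:ℝ)+1) * δ n)).indicator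
        (fun _ => Gf f w (((j:ℝ)+1) * δ n)) l with hhdef
  have hhmeas : ∀ n, Measurable (h n) := fun n =>
    Finset.measurable_sum _ fun j _ => measurable_const.indicator measurableSet_Ioc
  have hle : ∀ n, ∀ l : ℝ, 0 < l → h n l ≤ Gf f w l := by
    intro n l hl
    simp only [hhdef]
    by_cases hex : ∃ j ∈ Finset.range (n * 2^n),
        l ∈ Ioc ((j:ℝ) * δ n) (((j:ℝ)+1) * δ n)
    · obtain ⟨j, hjmem, hjl⟩ := hex
      rw [Finset.sum_eq_single_of_mem j hjmem ?_]
      · rw [indicator_of_mem hjl]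
        exact lintegral_mono_set (Vset_mono hjl.2)
      · intro b hb hbj
        refine indicator_of_notMem ?_ _
        intro hbl
        rcases Nat.lt_or_ge b j with hlt | hge
        · have h1 : ((b:ℝ)+1) ≤ (j:ℝ) := by exact_mod_cast hlt
          have h2 := hjl.1
          have h3 := hbl.2
          nlinarith [hδpos n]
        · have hgt : j < b := by omega
          have h1 : ((j:ℝ)+1) ≤ (b:ℝ) := by exact_mod_cast hgt
          have h2 := hbl.1
          have h3 := hjl.2
          nlinarith [hδpos n]
    · push_neg at hex
      rw [Finset.sum_eq_zero fun j hj => indicator_of_notMem (hex j hj) _]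
      exact zero_le
  have hge : ∀ l : ℝ, 0 < l → ∀ m : ℕ, ∀ᶠ n in atTop, Gf f w (l + δ m) ≤ h n l := by
    intro l hl m
    obtain ⟨n0, hn0⟩ := exists_nat_ge l
    filter_upwards [eventually_ge_atTop m, eventually_ge_atTop n0] with n hmn hn0n
    have hln : l ≤ (n:ℝ) := le_trans hn0 (by exact_mod_cast hn0n)
    have h2pos : (0:ℝ) < 2^n := by positivity
    have hδmul : (2:ℝ)^n * δ n = 1 := by
      rw [hδdef]; field_simp
    set k := ⌈l * 2^n⌉₊ with hk
    have hkpos : 0 < k := Nat.ceil_pos.2 (by positivity)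
    set j := k - 1 with hj
    have hjk : (j:ℝ) = (k:ℝ) - 1 := by
      rw [hj]; push_cast [hkpos]; ring
    have hceil_lt : (k:ℝ) < l * 2^n + 1 := Nat.ceil_lt_add_one (by positivity)
    have hle_ceil : l * 2^n ≤ (k:ℝ) := Nat.le_ceil _
    have hmem1 : (j:ℝ) * δ n < l := by
      have hmul := mul_lt_mul_of_pos_right (show (j:ℝ) < l * 2^n by rw [hjk]; linarith)
        (hδpos n)
      calc (j:ℝ) * δ n < l * 2^n * δ n := hmul
        _ = l := by rw [mul_assoc, hδmul, mul_one]
    have hmem2 : l ≤ ((j:ℝ)+1) * δ n := by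
      have hmul := mul_le_mul_of_nonneg_right hle_ceil (hδpos n).le
      calc l = l * 2^n * δ n := by rw [mul_assoc, hδmul, mul_one]
        _ ≤ (k:ℝ) * δ n := hmul
        _ = ((j:ℝ)+1) * δ n := by rw [hjk]; ring
    have hjrange : j ∈ Finset.range (n * 2^n) := by
      have hkle : k ≤ n * 2^n := by
        rw [hk]
        refine Nat.ceil_le.2 ?_
        push_cast
        nlinarith
      exact Finset.mem_range.2 (by omega)
    calc Gf f w (l + δ m) ≤ Gf f w (((j:ℝ)+1) * δ n) := by
          refine lintegral_mono_set (Vset_mono ?_)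
          have h4 : ((j:ℝ)+1) * δ n ≤ l + δ n := by nlinarith [hδpos n]
          linarith [hδanti hmn]
      _ = (Ioc ((j:ℝ) * δ n) (((j:ℝ)+1) * δ n)).indicator
            (fun _ => Gf f w (((j:ℝ)+1) * δ n)) l :=
          (indicator_of_mem (Set.mem_Ioc.2 ⟨hmem1, hmem2⟩) (fun _ => Gf f w (((j:ℝ)+1) * δ n))).symm
      _ ≤ h n l := by
          simp only [hhdef]
          exact Finset.single_le_sum
            (f := fun i : ℕ => (Ioc ((i:ℝ) * δ n) (((i:ℝ)+1) * δ n)).indicator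
              (fun _ => Gf f w (((i:ℝ)+1) * δ n)) l)
            (fun i _ => zero_le) hjrange
  have hliminf : ∀ l : ℝ, 0 < l → Gf f w l = liminf (fun n => h n l) atTop := by
    intro l hl
    apply le_antisymm
    · rw [RC hf l]
      refine iSup_le fun m => ?_
      calc Gf f w (l + δ m)
          = liminf (fun _ : ℕ => Gf f w (l + δ m)) atTop := (liminf_const _).symm
        _ ≤ liminf (fun n => h n l) atTop := liminf_le_liminf (hge l hl m)
    · calc liminf (fun n => h n l) atTop
          ≤ liminf (fun _ : ℕ => Gf f w l) atTop :=
            liminf_le_liminf (Eventually.of_forall fun n => hle n l hl)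
        _ = Gf f w l := liminf_const _
  calc ∫⁻ l in Ioi (0:ℝ), Gf f w l
      = ∫⁻ l in Ioi (0:ℝ), liminf (fun n => h n l) atTop :=
        setLIntegral_congr_fun measurableSet_Ioi (fun l hl => hliminf l hl)
    _ ≤ liminf (fun n => ∫⁻ l in Ioi (0:ℝ), h n l) atTop :=
        lintegral_liminf_le fun n => hhmeas n
    _ ≤ ⨆ n, ∫⁻ l in Ioi (0:ℝ), h n l := by
        refine le_trans (liminf_le_liminf (Eventually.of_forall fun n =>
          le_iSup (fun n => ∫⁻ l in Ioi (0:ℝ), h n l) n)) ?_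
        rw [liminf_const]
    _ ≤ SUP f w := by
        refine iSup_le fun n => ?_
        have hcalc : ∫⁻ l in Ioi (0:ℝ), h n l
            = ∑ j ∈ Finset.range (n * 2^n),
                ENNReal.ofReal (δ n) * (∫⁻ t in Vset w (((j:ℝ)+1) * δ n), f t) := by
          simp only [hhdef]
          rw [lintegral_finset_sum _
            (fun j _ => measurable_const.indicator measurableSet_Ioc)]
          refine Finset.sum_congr rfl fun j hj => ?_
          rw [lintegral_indicator measurableSet_Ioc,
            Measure.restrict_restrict measurableSet_Ioc, setLIntegral_const]
          have hsub : Ioc ((j:ℝ) * δ n) (((j:ℝ)+1) * δ n) ∩ Ioi 0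
              = Ioc ((j:ℝ) * δ n) (((j:ℝ)+1) * δ n) := by
            refine inter_eq_left.2 fun t ht => ?_
            have hj0 : (0:ℝ) ≤ (j:ℝ) * δ n := by positivity
            exact lt_of_le_of_lt hj0 ht.1
          rw [hsub, Real.volume_Ioc,
            show ((j:ℝ)+1) * δ n - (j:ℝ) * δ n = δ n by ring]
          exact mul_comm _ _
        rw [hcalc]
        exact step hf hw (hδpos n) (n * 2^n)


end Sinnamon

/-- Sinnamon's transfer-of-monotonicity principle: the supremum of
`∫₀^∞ g·w` over nonnegative measurable `g` with `∫₀^x g ≤ ∫₀^x f` for all `x > 0`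
equals `∫₀^∞ f(x) · (ess sup_{t ≥ x} w(t)) dx`. -/
theorem stmt0 (f w : ℝ → ℝ≥0∞) (hf : Measurable f) (hw : Measurable w) :
    (⨆ (g : ℝ → ℝ≥0∞) (_ : Measurable g)
        (_ : ∀ x : ℝ, 0 < x → (∫⁻ t in Ioc 0 x, g t) ≤ ∫⁻ t in Ioc 0 x, f t),
        ∫⁻ x in Ioi (0:ℝ), g x * w x)
      = ∫⁻ x in Ioi (0:ℝ), f x * essSup w (volume.restrict (Ici x)) := by
  have hrhs : (∫⁻ x in Ioi (0:ℝ), f x * essSup w (volume.restrict (Ici x)))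
      = ∫⁻ x in Ioi (0:ℝ), f x * Sinnamon.W w x := rfl
  apply le_antisymm
  · refine iSup_le fun g => iSup_le fun hg => iSup_le fun hadm => ?_
    rw [hrhs]
    calc ∫⁻ x in Ioi (0:ℝ), g x * w x
        ≤ ∫⁻ x in Ioi (0:ℝ), g x * Sinnamon.W w x := by
          refine lintegral_mono_ae ?_
          filter_upwards [ae_restrict_of_ae (Sinnamon.ae_w_le hw)] with x hx
          exact mul_le_mul_right hx _
      _ = ∫⁻ l in Ioi (0:ℝ), ∫⁻ x in Sinnamon.Vset w l, g x := Sinnamon.tonelli hw hg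
      _ ≤ ∫⁻ l in Ioi (0:ℝ), ∫⁻ x in Sinnamon.Vset w l, f x :=
          lintegral_mono fun l =>
            Sinnamon.low (Sinnamon.Vset_subset l) Sinnamon.Vset_lower hg hf hadm
      _ = ∫⁻ x in Ioi (0:ℝ), f x * Sinnamon.W w x := (Sinnamon.tonelli hw hf).symm
  · show _ ≤ Sinnamon.SUP f w
    rw [hrhs]
    calc ∫⁻ x in Ioi (0:ℝ), f x * Sinnamon.W w x
        = ∫⁻ l in Ioi (0:ℝ), ∫⁻ x in Sinnamon.Vset w l, f x := Sinnamon.tonelli hw hf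
      _ ≤ Sinnamon.SUP f w := Sinnamon.ge_dir hf hw
end

section
/- Let α > 0, let g be a nonnegative measurable function on (0,∞) with 0 < ∫₀^t g < ∞ for all t > 0, and let f be a nonnegative non-increasing right-continuous function on (0,∞). Then ∫₀^∞ (∫₀^t g)^α g(t)[f(t) − lim_{s→∞} f(s)] dt is finite if and only if ∫_{(0,∞)} (∫₀^t g)^{α+1} d(−f)(t) is finite, and moreover the two quantities are comparable with constants depending only on α. -/
open MeasureTheory Set Filter
open scoped ENNReal Topology

namespace Stmt1Aux

lemma G_mono (g : ℝ → ℝ≥0∞) : Monotone (fun t => ∫⁻ x in Ioc 0 t, g x) :=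
  fun _ _ hab => lintegral_mono_set (Ioc_subset_Ioc le_rfl hab)

lemma G_meas (g : ℝ → ℝ≥0∞) : Measurable (fun t => ∫⁻ x in Ioc 0 t, g x) :=
  (G_mono g).measurable

lemma phi_upper (α : ℝ) (hα : 0 < α) {g : ℝ → ℝ≥0∞} (hg : Measurable g) {s : ℝ}
    (hpos : 0 < ∫⁻ x in Ioc 0 s, g x) (hfin : (∫⁻ x in Ioc 0 s, g x) < ⊤) :
    (∫⁻ t in Ioo 0 s, (∫⁻ x in Ioc 0 t, g x) ^ α * g t) ≤ (∫⁻ x in Ioc 0 s, g x) ^ (α + 1) := by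
  set G : ℝ → ℝ≥0∞ := fun t => ∫⁻ x in Ioc 0 t, g x with hGdef
  calc (∫⁻ t in Ioo 0 s, G t ^ α * g t) ≤ ∫⁻ t in Ioo 0 s, G s ^ α * g t := by
        refine setLIntegral_mono' measurableSet_Ioo fun t ht => ?_
        exact mul_le_mul_left (ENNReal.rpow_le_rpow (G_mono g ht.2.le) hα.le) _
    _ = G s ^ α * ∫⁻ t in Ioo 0 s, g t := lintegral_const_mul _ hg
    _ ≤ G s ^ α * G s := mul_le_mul_right (lintegral_mono_set Ioo_subset_Ioc_self) _
    _ = G s ^ (α + 1) := by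
        rw [ENNReal.rpow_add α 1 hpos.ne' hfin.ne, ENNReal.rpow_one]

lemma phi_lower (α : ℝ) (hα : 0 < α) {g : ℝ → ℝ≥0∞} (hg : Measurable g) {s : ℝ}
    (hs : 0 < s) (hpos : 0 < ∫⁻ x in Ioc 0 s, g x)
    (hfin : (∫⁻ x in Ioc 0 s, g x) < ⊤) :
    (2⁻¹ : ℝ≥0∞) ^ (α + 1) * (∫⁻ x in Ioc 0 s, g x) ^ (α + 1)
      ≤ ∫⁻ t in Ioo 0 s, (∫⁻ x in Ioc 0 t, g x) ^ α * g t := by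
  set G : ℝ → ℝ≥0∞ := fun t => ∫⁻ x in Ioc 0 t, g x with hGdef
  set μ : Measure ℝ := volume.withDensity g with hμdef
  have hμac : μ ≪ volume := withDensity_absolutelyContinuous volume g
  have hμIoc : ∀ a b : ℝ, μ (Ioc a b) = ∫⁻ x in Ioc a b, g x := fun a b =>
    withDensity_apply g measurableSet_Ioc
  have hμsing : ∀ x : ℝ, μ {x} = 0 := fun x => hμac (measure_singleton x)
  have : NoAtoms μ := ⟨hμsing⟩
  set c : ℝ≥0∞ := G s / 2 with hcdef
  have hGs_fin : G s ≠ ⊤ := hfin.ne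
  have hc_pos : 0 < c := ENNReal.half_pos hpos.ne'
  have hc_fin : c ≠ ⊤ := by
    refine ne_top_of_le_ne_top hGs_fin ?_
    exact (ENNReal.half_le_self)
  set S : Set ℝ := Ioc 0 s ∩ {t | G t ≤ c} with hSdef
  have hμS : μ S ≤ c := by
    rcases S.eq_empty_or_nonempty with h | h
    · simp [h]
    · have hbdd : BddAbove S := ⟨s, fun t ht => ht.1.2⟩
      obtain ⟨u, hu_mono, hu_tend, hu_mem⟩ := exists_seq_tendsto_sSup h hbdd
      have hsub : S ⊆ (⋃ n, Ioc 0 (u n)) ∪ {sSup S} := by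
        intro x hx
        rcases eq_or_lt_of_le (le_csSup hbdd hx) with h' | h'
        · exact Or.inr (by simp [h'])
        · obtain ⟨n, hn⟩ := (hu_tend.eventually (eventually_gt_nhds h')).exists
          exact Or.inl (mem_iUnion.2 ⟨n, hx.1.1, hn.le⟩)
      have hmono' : Monotone (fun n => Ioc (0:ℝ) (u n)) :=
        fun a b hab => Ioc_subset_Ioc le_rfl (hu_mono hab)
      have hdir : Directed (· ⊆ ·) (fun n => Ioc (0:ℝ) (u n)) := hmono'.directed_le
      calc μ S ≤ μ ((⋃ n, Ioc 0 (u n)) ∪ {sSup S}) := measure_mono hsub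
        _ ≤ μ (⋃ n, Ioc 0 (u n)) + μ {sSup S} := measure_union_le _ _
        _ = μ (⋃ n, Ioc 0 (u n)) := by rw [hμsing, add_zero]
        _ = ⨆ n, μ (Ioc 0 (u n)) := hdir.measure_iUnion
        _ ≤ c := iSup_le fun n => by rw [hμIoc]; exact (hu_mem n).2
  have hμIoo : μ (Ioo 0 s) = G s := by
    rw [measure_congr Ioo_ae_eq_Ioc, hμIoc]
  have hdiff : c ≤ μ (Ioo 0 s \ S) := by
    have h2 : μ (Ioo 0 s) ≤ μ S + μ (Ioo 0 s \ S) := by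
      refine (measure_mono (fun x hx => ?_)).trans (measure_union_le _ _)
      by_cases hxS : x ∈ S
      · exact Or.inl hxS
      · exact Or.inr ⟨hx, hxS⟩
    have h3 : G s ≤ c + μ (Ioo 0 s \ S) :=
      hμIoo ▸ (h2.trans (add_le_add_left hμS _))
    have h4 : G s - c ≤ μ (Ioo 0 s \ S) := tsub_le_iff_left.2 h3
    rwa [hcdef, ENNReal.sub_half hGs_fin] at h4
  have hSmeas : MeasurableSet S :=
    measurableSet_Ioc.inter ((G_meas g) measurableSet_Iic)
  have hmain : c ^ α * c ≤ ∫⁻ t in Ioo 0 s, G t ^ α * g t := by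
    calc c ^ α * c ≤ c ^ α * μ (Ioo 0 s \ S) := mul_le_mul_right hdiff _
      _ = ∫⁻ _ in Ioo 0 s \ S, c ^ α ∂μ := (setLIntegral_const _ _).symm
      _ ≤ ∫⁻ t in Ioo 0 s \ S, G t ^ α ∂μ := by
          refine setLIntegral_mono' (measurableSet_Ioo.diff hSmeas) fun t ht => ?_
          have htS : t ∉ S := ht.2
          have : ¬ G t ≤ c := fun h => htS ⟨⟨ht.1.1, ht.1.2.le⟩, h⟩
          exact ENNReal.rpow_le_rpow (not_le.1 this).le hα.le
      _ ≤ ∫⁻ t in Ioo 0 s, G t ^ α ∂μ := lintegral_mono_set diff_subset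
      _ = ∫⁻ t in Ioo 0 s, g t * G t ^ α := by
          rw [hμdef, setLIntegral_withDensity_eq_setLIntegral_mul volume (f := g)
            (g := fun t => G t ^ α) hg
            (ENNReal.continuous_rpow_const.measurable.comp (G_meas g)) measurableSet_Ioo]
          rfl
      _ = ∫⁻ t in Ioo 0 s, G t ^ α * g t := by
          simp_rw [mul_comm]
  refine le_trans (le_of_eq ?_) hmain
  have h2ne : (2⁻¹ : ℝ≥0∞) ≠ ⊤ := by simp
  have hcc : c ^ (α + 1) = (2⁻¹ : ℝ≥0∞) ^ (α + 1) * G s ^ (α + 1) := by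
    rw [hcdef, div_eq_mul_inv, ENNReal.mul_rpow_of_ne_top hGs_fin h2ne, mul_comm]
  rw [show c ^ α * c = c ^ (α + 1) from by
      rw [ENNReal.rpow_add α 1 hc_pos.ne' hc_fin, ENNReal.rpow_one], hcc]

lemma measure_Ioi' (F : StieltjesFunction ℝ) {L : ℝ}
    (hF : Tendsto (fun x => -F x) atTop (𝓝 L)) (t : ℝ) :
    F.measure (Ioi t) = ENNReal.ofReal ((-F t) - L) := by
  have hFt : Tendsto F atTop (𝓝 (-L)) := by
    have := hF.neg
    simpa using this
  have h1 : Tendsto (fun y => F.measure (Ioc t y)) atTop (𝓝 (F.measure (Ioi t))) := by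
    rw [← iUnion_Ioc_right t]
    exact tendsto_measure_iUnion_atTop (antitone_const.Ioc monotone_id)
  have h2 : Tendsto (fun y => F.measure (Ioc t y)) atTop (𝓝 (ENNReal.ofReal ((-F t) - L))) := by
    simp_rw [F.measure_Ioc]
    have h3 : Tendsto (fun y => F y - F t) atTop (𝓝 (-L - F t)) := hFt.sub_const _
    have : (-L - F t) = (-F t) - L := by ring
    rw [← this]
    exact ENNReal.tendsto_ofReal h3
  exact tendsto_nhds_unique h1 h2

lemma fubini {g : ℝ → ℝ≥0∞} (hg : Measurable g) (α : ℝ) (F : StieltjesFunction ℝ) {L : ℝ}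
    (hF : Tendsto (fun x => -F x) atTop (𝓝 L)) :
    (∫⁻ t in Ioi (0:ℝ), (∫⁻ x in Ioc 0 t, g x) ^ α * g t * ENNReal.ofReal ((-F t) - L))
      = ∫⁻ s in Ioi (0:ℝ), (∫⁻ t in Ioo 0 s, (∫⁻ x in Ioc 0 t, g x) ^ α * g t) ∂F.measure := by
  set G : ℝ → ℝ≥0∞ := fun t => ∫⁻ x in Ioc 0 t, g x with hGdef
  set H : ℝ → ℝ≥0∞ := fun t => G t ^ α * g t with hHdef
  have hHmeas : Measurable H :=
    ((ENNReal.continuous_rpow_const.measurable).comp (G_meas g)).mul hg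
  have key : ∀ t ∈ Ioi (0:ℝ), H t * ENNReal.ofReal ((-F t) - L)
      = ∫⁻ s in Ioi (0:ℝ), ({p : ℝ × ℝ | p.1 < p.2}.indicator (fun p => H p.1)) (t, s)
          ∂F.measure := by
    intro t ht
    have heq : (fun s => ({p : ℝ × ℝ | p.1 < p.2}.indicator (fun p => H p.1)) (t, s))
        = (Ioi t).indicator (fun _ => H t) := by
      funext s
      by_cases h : t < s <;> simp [indicator, h]
    rw [heq, lintegral_indicator measurableSet_Ioi, Measure.restrict_restrict measurableSet_Ioi]
    have : Ioi t ∩ Ioi (0:ℝ) = Ioi t := by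
      rw [inter_eq_left]
      exact Ioi_subset_Ioi ht.le
    rw [this, setLIntegral_const, measure_Ioi' F hF t]
  rw [setLIntegral_congr_fun measurableSet_Ioi key]
  have hswap := lintegral_lintegral_swap (μ := volume.restrict (Ioi (0:ℝ)))
    (ν := F.measure.restrict (Ioi (0:ℝ)))
    (f := fun t s => ({p : ℝ × ℝ | p.1 < p.2}.indicator (fun p => H p.1)) (t, s))
    (((hHmeas.comp measurable_fst).indicator
        (measurableSet_lt measurable_fst measurable_snd)).aemeasurable)
  rw [hswap]
  refine setLIntegral_congr_fun measurableSet_Ioi (fun s hs => ?_)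
  have heq : (fun t => ({p : ℝ × ℝ | p.1 < p.2}.indicator (fun p => H p.1)) (t, s))
      = (Iio s).indicator H := by
    funext t
    by_cases h : t < s <;> simp [indicator, h]
  rw [heq, lintegral_indicator measurableSet_Iio, Measure.restrict_restrict measurableSet_Iio,
    Iio_inter_Ioi]

end Stmt1Aux

open Stmt1Aux in
/-- Integration by parts for Lebesgue–Stieltjes measures: with `f = -F` nonnegative
non-increasing right-continuous (encoded via the Stieltjes function `F`, so that
`d(-f) = dF`), and `g` nonnegative with `0 < ∫₀^t g < ∞` for all `t > 0`,
the quantities `A₁ = ∫₀^∞ (∫₀^t g)^α g(t) [f(t) - lim_{s→∞} f(s)] dt` and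
`A₂ = ∫_(0,∞) (∫₀^t g)^{α+1} d(-f)(t)` are comparable (constants depending only on `α`),
and in particular one is finite iff the other is. -/
theorem stmt1 (α : ℝ) (hα : 0 < α) :
    ∃ c C : ℝ≥0∞, 0 < c ∧ C < ⊤ ∧
      ∀ (g : ℝ → ℝ≥0∞), Measurable g →
        (∀ t : ℝ, 0 < t → 0 < ∫⁻ s in Ioc 0 t, g s) →
        (∀ t : ℝ, 0 < t → (∫⁻ s in Ioc 0 t, g s) < ⊤) →
        ∀ (F : StieltjesFunction ℝ) (L : ℝ),
          (∀ x : ℝ, 0 < x → 0 ≤ -F x) →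
          Tendsto (fun x => -F x) atTop (𝓝 L) →
          (c * (∫⁻ t in Ioi (0:ℝ), (∫⁻ s in Ioc 0 t, g s) ^ (α + 1) ∂(F.measure))
              ≤ ∫⁻ t in Ioi (0:ℝ),
                  (∫⁻ s in Ioc 0 t, g s) ^ α * g t * ENNReal.ofReal ((-F t) - L)) ∧
          ((∫⁻ t in Ioi (0:ℝ),
                (∫⁻ s in Ioc 0 t, g s) ^ α * g t * ENNReal.ofReal ((-F t) - L))
              ≤ C * ∫⁻ t in Ioi (0:ℝ), (∫⁻ s in Ioc 0 t, g s) ^ (α + 1) ∂(F.measure)) ∧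
          ((∫⁻ t in Ioi (0:ℝ),
                (∫⁻ s in Ioc 0 t, g s) ^ α * g t * ENNReal.ofReal ((-F t) - L)) < ⊤ ↔
            (∫⁻ t in Ioi (0:ℝ), (∫⁻ s in Ioc 0 t, g s) ^ (α + 1) ∂(F.measure)) < ⊤) := by
  refine ⟨(2⁻¹ : ℝ≥0∞) ^ (α + 1), 1, ?_, ?_, ?_⟩
  · exact ENNReal.rpow_pos (by norm_num) (by simp)
  · exact ENNReal.one_lt_top
  intro g hg hpos hfin F L hFnn hFL
  set G : ℝ → ℝ≥0∞ := fun t => ∫⁻ x in Ioc 0 t, g x with hGdef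
  set c : ℝ≥0∞ := (2⁻¹ : ℝ≥0∞) ^ (α + 1) with hcdef
  have hc_pos : 0 < c := ENNReal.rpow_pos (by norm_num) (by simp)
  have hc_fin : c ≠ ⊤ := (ENNReal.rpow_lt_top_of_nonneg (by linarith) (by simp)).ne
  have hFub := fubini hg α F hFL
  have hA2meas : Measurable (fun s => G s ^ (α + 1)) :=
    (ENNReal.continuous_rpow_const.measurable).comp (G_meas g)
  have hΦmono : Monotone (fun s : ℝ => ∫⁻ t in Ioo 0 s, G t ^ α * g t) :=
    fun a b hab => lintegral_mono_set (Ioo_subset_Ioo le_rfl hab)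
  have hlow : c * (∫⁻ s in Ioi (0:ℝ), G s ^ (α + 1) ∂(F.measure))
      ≤ ∫⁻ t in Ioi (0:ℝ), G t ^ α * g t * ENNReal.ofReal ((-F t) - L) := by
    rw [hFub, ← lintegral_const_mul' _ _ hc_fin]
    exact setLIntegral_mono' measurableSet_Ioi fun s hs =>
      phi_lower α hα hg hs (hpos s hs) (hfin s hs)
  have hup : (∫⁻ t in Ioi (0:ℝ), G t ^ α * g t * ENNReal.ofReal ((-F t) - L))
      ≤ 1 * ∫⁻ s in Ioi (0:ℝ), G s ^ (α + 1) ∂(F.measure) := by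
    rw [one_mul, hFub]
    exact setLIntegral_mono hA2meas fun s hs => phi_upper α hα hg (hpos s hs) (hfin s hs)
  refine ⟨hlow, hup, ?_, ?_⟩
  · intro h1
    have h2 : (∫⁻ s in Ioi (0:ℝ), G s ^ (α + 1) ∂(F.measure))
        ≤ c⁻¹ * ∫⁻ t in Ioi (0:ℝ), G t ^ α * g t * ENNReal.ofReal ((-F t) - L) := by
      calc (∫⁻ s in Ioi (0:ℝ), G s ^ (α + 1) ∂(F.measure))
          = c⁻¹ * (c * ∫⁻ s in Ioi (0:ℝ), G s ^ (α + 1) ∂(F.measure)) := by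
            rw [← mul_assoc, ENNReal.inv_mul_cancel hc_pos.ne' hc_fin, one_mul]
        _ ≤ c⁻¹ * ∫⁻ t in Ioi (0:ℝ), G t ^ α * g t * ENNReal.ofReal ((-F t) - L) :=
            mul_le_mul_right hlow _
    exact lt_of_le_of_lt h2 (ENNReal.mul_lt_top (ENNReal.inv_lt_top.2 hc_pos) h1)
  · intro h2
    exact lt_of_le_of_lt hup (by rwa [one_mul])
end

section
/- Let 1 < r < p < ∞, let h and u be nonnegative measurable functions on (0,∞). Then for every t > 0: ∫₀^∞ (1/(s+t))^{r/(p−r)} (∫₀^s h u^r)^{r/(p−r)} h(s)u(s)^r ds is comparable (with constants depending only on p and r) to ∫₀^∞ (∫₀^s h u^r)^{p/(p−r)} (1/(s+t))^{p/(p−r)} ds. -/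
open MeasureTheory Set Filter
open scoped ENNReal

/-- Measure of the "down-set" where the running integral is at most `m` is at most `m`. -/
lemma aux_downset_le (ν : Measure ℝ) (y : ℝ) (m : ℝ≥0∞) :
    ν {x | x ∈ Ioc (0:ℝ) y ∧ ν (Ioc 0 x) ≤ m} ≤ m := by
  set D := {x | x ∈ Ioc (0:ℝ) y ∧ ν (Ioc 0 x) ≤ m} with hDdef
  rcases eq_empty_or_nonempty D with hD | hD
  · simp [hD]
  have hbdd : BddAbove D := ⟨y, fun x hx => hx.1.2⟩
  set b := sSup D with hbdef
  have hx₀ := hD.some_mem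
  have hb0 : 0 < b := lt_of_lt_of_le hx₀.1.1 (le_csSup hbdd hx₀)
  have hHlt : ∀ z : ℝ, z < b → ν (Ioc 0 z) ≤ m := by
    intro z hz
    obtain ⟨x, hxD, hzx⟩ := exists_lt_of_lt_csSup hD hz
    exact le_trans (measure_mono (Ioc_subset_Ioc_right hzx.le)) hxD.2
  by_cases hbD : b ∈ D
  · refine le_trans (measure_mono ?_) hbD.2
    intro x hx
    exact ⟨hx.1.1, le_csSup hbdd hx⟩
  · have hsub : D ⊆ Ioo 0 b := by
      intro x hx
      have hxb : x ≤ b := le_csSup hbdd hx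
      rcases lt_or_eq_of_le hxb with h | h
      · exact ⟨hx.1.1, h⟩
      · exact absurd (h ▸ hx) hbD
    refine le_trans (measure_mono hsub) ?_
    have hunion : Ioo (0:ℝ) b = ⋃ n : ℕ, Ioc 0 (b - 1/(n+1)) := by
      ext x
      simp only [mem_Ioo, mem_iUnion, mem_Ioc]
      constructor
      · rintro ⟨hx0, hxb⟩
        obtain ⟨n, hn⟩ := exists_nat_one_div_lt (by linarith : (0:ℝ) < b - x)
        exact ⟨n, hx0, by push_cast at hn ⊢; linarith⟩
      · rintro ⟨n, hx0, hxn⟩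
        have : (0:ℝ) < 1/(n+1) := by positivity
        exact ⟨hx0, by linarith⟩
    rw [hunion]
    have hmono : Monotone fun n : ℕ => Ioc (0:ℝ) (b - 1/(n+1)) := by
      intro i j hij
      apply Ioc_subset_Ioc_right
      have h1 : (1:ℝ)/(j+1) ≤ 1/(i+1) := by
        apply one_div_le_one_div_of_le (by positivity)
        have : (i:ℝ) ≤ j := by exact_mod_cast hij
        push_cast; linarith
      linarith
    rw [hmono.directed_le.measure_iUnion]
    exact iSup_le fun n => hHlt _ (by
      have : (0:ℝ) < 1/(n+1) := by positivity
      linarith)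

/-- Lower bound: `H(y)^(α+1) ≤ 2^(α+1) * ∫_{(0,y]} H^α f`. -/
lemma aux_keyLower {f : ℝ → ℝ≥0∞} (hf : Measurable f) {α : ℝ} (hα : 0 < α) (y : ℝ) :
    (∫⁻ x in Ioc (0:ℝ) y, f x) ^ (α + 1)
      ≤ 2 ^ (α + 1) * ∫⁻ s in Ioc (0:ℝ) y, (∫⁻ x in Ioc (0:ℝ) s, f x) ^ α * f s := by
  set ν : Measure ℝ := volume.withDensity f with hν
  have hνapp : ∀ S : Set ℝ, MeasurableSet S → ν S = ∫⁻ x in S, f x := fun S hS =>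
    withDensity_apply f hS
  set H : ℝ → ℝ≥0∞ := fun s => ∫⁻ x in Ioc (0:ℝ) s, f x with hHdef
  have hHmono : Monotone H := fun a b hab =>
    lintegral_mono_set (Ioc_subset_Ioc_right hab)
  have hHmeas : Measurable H := hHmono.measurable
  set L : ℝ≥0∞ := ∫⁻ s in Ioc (0:ℝ) y, H s ^ α * f s with hLdef
  show H y ^ (α + 1) ≤ 2 ^ (α + 1) * L
  -- general estimate for any m < H y with m ≠ ⊤
  have key : ∀ m : ℝ≥0∞, m < H y → m ^ α * (H y - m) ≤ L := by
    intro m hm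
    have hmtop : m ≠ ⊤ := hm.ne_top
    set T : Set ℝ := Ioc 0 y ∩ {x | m < H x} with hTdef
    have hTmeas : MeasurableSet T :=
      measurableSet_Ioc.inter (hHmeas measurableSet_Ioi)
    have hsplit : H y ≤ m + ν T := by
      have hcover : Ioc (0:ℝ) y ⊆ {x | x ∈ Ioc (0:ℝ) y ∧ ν (Ioc 0 x) ≤ m} ∪ T := by
        intro x hx
        rcases le_or_gt (H x) m with h | h
        · left; exact ⟨hx, by rwa [hνapp _ measurableSet_Ioc]⟩
        · right; exact ⟨hx, h⟩
      have := measure_mono (μ := ν) hcover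
      rw [hνapp _ measurableSet_Ioc] at this
      calc H y ≤ ν ({x | x ∈ Ioc (0:ℝ) y ∧ ν (Ioc 0 x) ≤ m} ∪ T) := this
        _ ≤ ν {x | x ∈ Ioc (0:ℝ) y ∧ ν (Ioc 0 x) ≤ m} + ν T := measure_union_le _ _
        _ ≤ m + ν T := add_le_add_left (aux_downset_le ν y m) _
    have hT : H y - m ≤ ν T := tsub_le_iff_left.2 hsplit
    have h1 : m ^ α * ν T ≤ L := by
      rw [hνapp _ hTmeas]
      calc m ^ α * ∫⁻ x in T, f x = ∫⁻ x in T, m ^ α * f x := by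
            rw [lintegral_const_mul' _ _ (ENNReal.rpow_ne_top_of_nonneg hα.le hmtop)]
        _ ≤ ∫⁻ x in T, H x ^ α * f x := by
            refine setLIntegral_mono' hTmeas fun x hx => ?_
            exact mul_le_mul_left (ENNReal.rpow_le_rpow hx.2.le hα.le) _
        _ ≤ L := lintegral_mono_set inter_subset_left
    exact le_trans (mul_le_mul_right hT _) h1
  rcases eq_top_or_lt_top (H y) with htop | hfin
  · have h1 : (1:ℝ≥0∞) ^ α * (H y - 1) ≤ L := key 1 (by rw [htop]; exact ENNReal.one_lt_top)
    rw [ENNReal.one_rpow, one_mul, htop] at h1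
    rw [ENNReal.top_sub ENNReal.one_ne_top, top_le_iff] at h1
    rw [h1, ENNReal.mul_top (ENNReal.rpow_pos (by norm_num) (by norm_num)).ne']
    exact le_top
  · rcases eq_or_ne (H y) 0 with h0 | h0
    · rw [h0, ENNReal.zero_rpow_of_pos (by linarith)]
      exact zero_le
    · have hm : H y / 2 < H y := ENNReal.half_lt_self h0 hfin.ne
      have := key (H y / 2) hm
      rw [ENNReal.sub_half hfin.ne] at this
      have heq : (H y / 2) ^ α * (H y / 2) = (H y) ^ (α + 1) / 2 ^ (α + 1) := by
        calc (H y / 2) ^ α * (H y / 2) = (H y / 2) ^ (α + 1) := by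
              rw [ENNReal.rpow_add_of_nonneg _ _ hα.le zero_le_one, ENNReal.rpow_one]
          _ = (H y) ^ (α + 1) / 2 ^ (α + 1) :=
              ENNReal.div_rpow_of_nonneg _ _ (by positivity)
      rw [heq] at this
      calc (H y) ^ (α + 1)
          = 2 ^ (α + 1) * ((H y) ^ (α + 1) / 2 ^ (α + 1)) := by
            rw [ENNReal.mul_div_cancel
              (ENNReal.rpow_pos (by norm_num) (by norm_num)).ne'
              (ENNReal.rpow_ne_top_of_nonneg (by positivity) (by norm_num))]
        _ ≤ 2 ^ (α + 1) * L := mul_le_mul_right this _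

/-- Upper bound: `∫_{(0,y]} H^α f ≤ H(y)^(α+1)`. -/
lemma aux_keyUpper {f : ℝ → ℝ≥0∞} (hf : Measurable f) {α : ℝ} (hα : 0 < α) (y : ℝ) :
    (∫⁻ s in Ioc (0:ℝ) y, (∫⁻ x in Ioc (0:ℝ) s, f x) ^ α * f s)
      ≤ (∫⁻ x in Ioc (0:ℝ) y, f x) ^ (α + 1) := by
  set H : ℝ → ℝ≥0∞ := fun s => ∫⁻ x in Ioc (0:ℝ) s, f x with hHdef
  have hHmono : Monotone H := fun a b hab =>
    lintegral_mono_set (Ioc_subset_Ioc_right hab)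
  show (∫⁻ s in Ioc (0:ℝ) y, H s ^ α * f s) ≤ H y ^ (α + 1)
  calc (∫⁻ s in Ioc (0:ℝ) y, H s ^ α * f s)
      ≤ ∫⁻ s in Ioc (0:ℝ) y, H y ^ α * f s := by
        refine setLIntegral_mono' measurableSet_Ioc fun s hs => ?_
        exact mul_le_mul_left (ENNReal.rpow_le_rpow (hHmono hs.2) hα.le) _
    _ = H y ^ α * H y := lintegral_const_mul _ hf
    _ = H y ^ (α + 1) := by
        rw [ENNReal.rpow_add_of_nonneg _ _ hα.le zero_le_one, ENNReal.rpow_one]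


/-- Translation invariance for set lintegrals on `Ioi`. -/
lemma aux_translate {g : ℝ → ℝ≥0∞} (hg : Measurable g) (s t : ℝ) :
    ∫⁻ y in Ioi s, g (y + t) = ∫⁻ z in Ioi (s + t), g z := by
  rw [← lintegral_indicator (f := fun y => g (y + t)) measurableSet_Ioi]
  have h2 : ∀ y : ℝ, (Ioi s).indicator (fun y => g (y+t)) y = (Ioi (s+t)).indicator g (y+t) := by
    intro y
    simp [Set.indicator_apply, mem_Ioi, add_lt_add_iff_right]
  simp only [h2]
  rw [← lintegral_map (hg.indicator measurableSet_Ioi) (measurable_add_const t),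
    map_add_right_eq_self volume t, lintegral_indicator measurableSet_Ioi]

/-- `∫_{c}^{∞} z^{-(α+1)} dz = c^{-α}/α` (as an `ℝ≥0∞` integral). -/
lemma aux_wint {α : ℝ} (hα : 0 < α) {c : ℝ} (hc : 0 < c) :
    ∫⁻ z in Ioi c, (ENNReal.ofReal z)⁻¹ ^ (α + 1) = ENNReal.ofReal (c ^ (-α) / α) := by
  have hq : -(α+1) < -1 := by linarith
  have h1 : ∀ z ∈ Ioi c, (ENNReal.ofReal z)⁻¹ ^ (α+1) = ENNReal.ofReal (z ^ (-(α+1))) := by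
    intro z hz
    have hz0 : 0 < z := hc.trans hz
    rw [ENNReal.inv_rpow, ENNReal.ofReal_rpow_of_pos hz0,
      ← ENNReal.ofReal_inv_of_pos (Real.rpow_pos_of_pos hz0 _),
      ← Real.rpow_neg hz0.le]
  rw [setLIntegral_congr_fun measurableSet_Ioi h1,
    ← ofReal_integral_eq_lintegral_ofReal (integrableOn_Ioi_rpow_of_lt hq hc)
      ((ae_restrict_iff' measurableSet_Ioi).2
        (ae_of_all _ fun z hz => Real.rpow_nonneg (hc.trans hz).le _)),
    integral_Ioi_rpow_of_lt hq hc]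
  congr 1
  rw [show -(α+1)+1 = -α by ring, neg_div_neg_eq]

/-- Tonelli swap for the triangular region `0 < s < y`. -/
lemma aux_swap (φ ψ : ℝ → ℝ≥0∞) (hφ : Measurable φ) (hψ : Measurable ψ) :
    ∫⁻ s in Ioi (0:ℝ), ∫⁻ y in Ioi s, ψ y * φ s
      = ∫⁻ y in Ioi (0:ℝ), ψ y * ∫⁻ s in Ioc 0 y, φ s := by
  set F : ℝ → ℝ → ℝ≥0∞ := fun s y => if 0 < s ∧ s < y then ψ y * φ s else 0 with hF
  have hFm : Measurable (Function.uncurry F) := by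
    refine Measurable.ite ?_ ((hψ.comp measurable_snd).mul (hφ.comp measurable_fst))
      measurable_const
    exact (measurableSet_lt measurable_const measurable_fst).inter
      (measurableSet_lt measurable_fst measurable_snd)
  have hL : ∫⁻ s in Ioi (0:ℝ), ∫⁻ y in Ioi s, ψ y * φ s = ∫⁻ s, ∫⁻ y, F s y := by
    rw [← lintegral_indicator measurableSet_Ioi]
    refine lintegral_congr fun s => ?_
    by_cases hs : 0 < s
    · rw [indicator_of_mem (mem_Ioi.2 hs), ← lintegral_indicator measurableSet_Ioi]
      refine lintegral_congr fun y => ?_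
      by_cases hy : s < y
      · simp [hF, indicator_of_mem (mem_Ioi.2 hy), hs, hy]
      · simp [hF, indicator_of_notMem (fun hc => hy hc : y ∉ Ioi s), hs, hy]
    · rw [indicator_of_notMem (fun hc => hs hc : s ∉ Ioi (0:ℝ))]
      symm
      simp [hF, hs]
  have hR : ∫⁻ y in Ioi (0:ℝ), ψ y * ∫⁻ s in Ioc 0 y, φ s = ∫⁻ y, ∫⁻ s, F s y := by
    rw [← lintegral_indicator measurableSet_Ioi]
    refine lintegral_congr fun y => ?_
    by_cases hy : 0 < y
    · rw [indicator_of_mem (mem_Ioi.2 hy)]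
      have hIoo : ∫⁻ s in Ioc (0:ℝ) y, φ s = ∫⁻ s in Ioo (0:ℝ) y, φ s := by
        rw [Measure.restrict_congr_set Ioo_ae_eq_Ioc]
      rw [hIoo, ← lintegral_const_mul _ hφ, ← lintegral_indicator measurableSet_Ioo]
      refine lintegral_congr fun s => ?_
      by_cases hs : s ∈ Ioo (0:ℝ) y
      · simp [hF, indicator_of_mem hs, hs.1, hs.2]
      · rw [indicator_of_notMem hs]
        have : ¬ (0 < s ∧ s < y) := fun hc => hs ⟨hc.1, hc.2⟩
        simp [hF, this]
    · have : ∀ s, F s y = 0 := by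
        intro s
        have : ¬ (0 < s ∧ s < y) := fun hc => hy (lt_trans hc.1 hc.2)
        simp [hF, this]
      simp only [this]
      rw [indicator_of_notMem (fun hc => hy hc : y ∉ Ioi (0:ℝ))]
      simp
  rw [hL, hR, lintegral_lintegral_swap hFm.aemeasurable]

/-- Main two-sided estimate with explicit constants, for a general density `f`. -/
lemma aux_main {f : ℝ → ℝ≥0∞} (hf : Measurable f) {α : ℝ} (hα : 0 < α) {t : ℝ} (ht : 0 < t) :
    (ENNReal.ofReal α * ((2:ℝ≥0∞) ^ (α+1))⁻¹ *
        (∫⁻ s in Ioi (0:ℝ), (∫⁻ x in Ioc 0 s, f x) ^ (α+1) * ((ENNReal.ofReal (s+t))⁻¹) ^ (α+1))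
      ≤ ∫⁻ s in Ioi (0:ℝ), ((ENNReal.ofReal (s+t))⁻¹) ^ α * (∫⁻ x in Ioc 0 s, f x) ^ α * f s) ∧
    ((∫⁻ s in Ioi (0:ℝ), ((ENNReal.ofReal (s+t))⁻¹) ^ α * (∫⁻ x in Ioc 0 s, f x) ^ α * f s)
      ≤ ENNReal.ofReal α *
        ∫⁻ s in Ioi (0:ℝ), (∫⁻ x in Ioc 0 s, f x) ^ (α+1) * ((ENNReal.ofReal (s+t))⁻¹) ^ (α+1)) := by
  have hHmono : Monotone (fun s => ∫⁻ x in Ioc (0:ℝ) s, f x) := fun a b hab =>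
    lintegral_mono_set (Ioc_subset_Ioc_right hab)
  have hHmeas : Measurable (fun s => ∫⁻ x in Ioc (0:ℝ) s, f x) := hHmono.measurable
  have hφmeas : Measurable (fun s => (∫⁻ x in Ioc (0:ℝ) s, f x) ^ α * f s) :=
    (hHmeas.pow measurable_const).mul hf
  have hwqmeas : Measurable (fun y : ℝ => ((ENNReal.ofReal (y + t))⁻¹) ^ (α+1)) :=
    ((ENNReal.measurable_ofReal.comp (measurable_add_const t)).inv).pow measurable_const
  have h2ne0 : ((2:ℝ≥0∞) ^ (α+1)) ≠ 0 := (ENNReal.rpow_pos (by norm_num) (by norm_num)).ne'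
  have h2netop : ((2:ℝ≥0∞) ^ (α+1)) ≠ ⊤ :=
    ENNReal.rpow_ne_top_of_nonneg (by positivity) (by norm_num)
  -- step 1 : the weight identity
  have step1 : ∀ s ∈ Ioi (0:ℝ), ((ENNReal.ofReal (s+t))⁻¹) ^ α
      = ENNReal.ofReal α * ∫⁻ y in Ioi s, ((ENNReal.ofReal (y+t))⁻¹) ^ (α+1) := by
    intro s hs
    have hst : 0 < s + t := by have := mem_Ioi.1 hs; linarith
    have htr : (∫⁻ y in Ioi s, ((ENNReal.ofReal (y+t))⁻¹) ^ (α+1))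
        = ∫⁻ z in Ioi (s+t), (ENNReal.ofReal z)⁻¹ ^ (α+1) :=
      aux_translate (((ENNReal.measurable_ofReal).inv).pow measurable_const) s t
    rw [htr, aux_wint hα hst, ← ENNReal.ofReal_mul hα.le,
      mul_div_cancel₀ _ hα.ne', ENNReal.inv_rpow,
      ENNReal.ofReal_rpow_of_pos hst,
      ← ENNReal.ofReal_inv_of_pos (Real.rpow_pos_of_pos hst _),
      ← Real.rpow_neg hst.le]
  -- the key identity via Tonelli
  have key1 : (∫⁻ s in Ioi (0:ℝ), ((ENNReal.ofReal (s+t))⁻¹) ^ α * (∫⁻ x in Ioc 0 s, f x) ^ α * f s)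
      = ENNReal.ofReal α * ∫⁻ y in Ioi (0:ℝ), ((ENNReal.ofReal (y+t))⁻¹) ^ (α+1)
          * ∫⁻ s in Ioc 0 y, (∫⁻ x in Ioc 0 s, f x) ^ α * f s := by
    calc ∫⁻ s in Ioi (0:ℝ), ((ENNReal.ofReal (s+t))⁻¹) ^ α * (∫⁻ x in Ioc 0 s, f x) ^ α * f s
        = ∫⁻ s in Ioi (0:ℝ), ENNReal.ofReal α *
            ∫⁻ y in Ioi s, ((ENNReal.ofReal (y+t))⁻¹) ^ (α+1)
              * ((∫⁻ x in Ioc 0 s, f x) ^ α * f s) := by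
          refine setLIntegral_congr_fun measurableSet_Ioi (fun s hs => ?_)
          rw [lintegral_mul_const _ hwqmeas, step1 s hs]
          ring
      _ = ENNReal.ofReal α * ∫⁻ s in Ioi (0:ℝ),
            ∫⁻ y in Ioi s, ((ENNReal.ofReal (y+t))⁻¹) ^ (α+1)
              * ((∫⁻ x in Ioc 0 s, f x) ^ α * f s) := by
          rw [lintegral_const_mul' _ _ ENNReal.ofReal_ne_top]
      _ = ENNReal.ofReal α * ∫⁻ y in Ioi (0:ℝ), ((ENNReal.ofReal (y+t))⁻¹) ^ (α+1)
            * ∫⁻ s in Ioc 0 y, (∫⁻ x in Ioc 0 s, f x) ^ α * f s := by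
          rw [aux_swap _ _ hφmeas hwqmeas]
  constructor
  · -- lower bound
    have low : (∫⁻ s in Ioi (0:ℝ), (∫⁻ x in Ioc 0 s, f x) ^ (α+1) * ((ENNReal.ofReal (s+t))⁻¹) ^ (α+1))
        ≤ (2:ℝ≥0∞) ^ (α+1) * ∫⁻ y in Ioi (0:ℝ), ((ENNReal.ofReal (y+t))⁻¹) ^ (α+1)
            * ∫⁻ s in Ioc 0 y, (∫⁻ x in Ioc 0 s, f x) ^ α * f s := by
      rw [← lintegral_const_mul' _ _ h2netop]
      refine lintegral_mono fun y => ?_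
      calc (∫⁻ x in Ioc 0 y, f x) ^ (α+1) * ((ENNReal.ofReal (y+t))⁻¹) ^ (α+1)
          ≤ ((2:ℝ≥0∞) ^ (α+1) * ∫⁻ s in Ioc 0 y, (∫⁻ x in Ioc 0 s, f x) ^ α * f s)
              * ((ENNReal.ofReal (y+t))⁻¹) ^ (α+1) :=
            mul_le_mul_left (aux_keyLower hf hα y) _
        _ = (2:ℝ≥0∞) ^ (α+1) * (((ENNReal.ofReal (y+t))⁻¹) ^ (α+1)
              * ∫⁻ s in Ioc 0 y, (∫⁻ x in Ioc 0 s, f x) ^ α * f s) := by ring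
    calc ENNReal.ofReal α * ((2:ℝ≥0∞) ^ (α+1))⁻¹ *
          (∫⁻ s in Ioi (0:ℝ), (∫⁻ x in Ioc 0 s, f x) ^ (α+1) * ((ENNReal.ofReal (s+t))⁻¹) ^ (α+1))
        ≤ ENNReal.ofReal α * ((2:ℝ≥0∞) ^ (α+1))⁻¹ *
          ((2:ℝ≥0∞) ^ (α+1) * ∫⁻ y in Ioi (0:ℝ), ((ENNReal.ofReal (y+t))⁻¹) ^ (α+1)
            * ∫⁻ s in Ioc 0 y, (∫⁻ x in Ioc 0 s, f x) ^ α * f s) := mul_le_mul_right low _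
      _ = ENNReal.ofReal α * ∫⁻ y in Ioi (0:ℝ), ((ENNReal.ofReal (y+t))⁻¹) ^ (α+1)
            * ∫⁻ s in Ioc 0 y, (∫⁻ x in Ioc 0 s, f x) ^ α * f s := by
          rw [mul_assoc (ENNReal.ofReal α), ← mul_assoc (((2:ℝ≥0∞) ^ (α+1))⁻¹),
            ENNReal.inv_mul_cancel h2ne0 h2netop, one_mul]
      _ = _ := key1.symm
  · -- upper bound
    rw [key1]
    refine mul_le_mul_right (lintegral_mono fun y => ?_) _
    calc ((ENNReal.ofReal (y+t))⁻¹) ^ (α+1) * ∫⁻ s in Ioc 0 y, (∫⁻ x in Ioc 0 s, f x) ^ α * f s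
        ≤ ((ENNReal.ofReal (y+t))⁻¹) ^ (α+1) * (∫⁻ x in Ioc 0 y, f x) ^ (α+1) :=
          mul_le_mul_right (aux_keyUpper hf hα y) _
      _ = (∫⁻ x in Ioc 0 y, f x) ^ (α+1) * ((ENNReal.ofReal (y+t))⁻¹) ^ (α+1) := mul_comm _ _

/-- For `1 < r < p < ∞` and nonnegative measurable `h, u` on `(0,∞)`, for every `t > 0`:
`∫₀^∞ (1/(s+t))^{r/(p-r)} (∫₀^s h u^r)^{r/(p-r)} h(s) u(s)^r ds ≈
 ∫₀^∞ (∫₀^s h u^r)^{p/(p-r)} (1/(s+t))^{p/(p-r)} ds`,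
with constants depending only on `p` and `r`. -/
theorem stmt10 (p r : ℝ) (hr : 1 < r) (hrp : r < p) :
    ∃ c C : ℝ≥0∞, 0 < c ∧ C < ⊤ ∧
      ∀ (h u : ℝ → ℝ≥0∞), Measurable h → Measurable u → ∀ t : ℝ, 0 < t →
        (c * (∫⁻ s in Ioi (0:ℝ),
                (∫⁻ x in Ioc 0 s, h x * u x ^ r) ^ (p/(p-r))
                  * ((ENNReal.ofReal (s + t))⁻¹) ^ (p/(p-r)))
            ≤ ∫⁻ s in Ioi (0:ℝ),
                ((ENNReal.ofReal (s + t))⁻¹) ^ (r/(p-r))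
                  * (∫⁻ x in Ioc 0 s, h x * u x ^ r) ^ (r/(p-r)) * (h s * u s ^ r)) ∧
        ((∫⁻ s in Ioi (0:ℝ),
              ((ENNReal.ofReal (s + t))⁻¹) ^ (r/(p-r))
                * (∫⁻ x in Ioc 0 s, h x * u x ^ r) ^ (r/(p-r)) * (h s * u s ^ r))
            ≤ C * ∫⁻ s in Ioi (0:ℝ),
                (∫⁻ x in Ioc 0 s, h x * u x ^ r) ^ (p/(p-r))
                  * ((ENNReal.ofReal (s + t))⁻¹) ^ (p/(p-r))) := by
  have hpr : 0 < p - r := by linarith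
  have hα : 0 < r/(p-r) := div_pos (by linarith) hpr
  have hq : p/(p-r) = r/(p-r) + 1 := by field_simp; ring
  refine ⟨ENNReal.ofReal (r/(p-r)) * ((2:ℝ≥0∞) ^ (p/(p-r)))⁻¹, ENNReal.ofReal (r/(p-r)),
    ?_, ?_, ?_⟩
  · refine ENNReal.mul_pos (ENNReal.ofReal_pos.2 hα).ne' ?_
    exact (ENNReal.inv_ne_zero.2
      (ENNReal.rpow_ne_top_of_nonneg (le_of_lt (div_pos (by linarith) hpr)) (by norm_num)))
  · exact ENNReal.ofReal_lt_top
  · intro h u hh hu t ht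
    have hf : Measurable (fun x => h x * u x ^ r) := hh.mul (hu.pow measurable_const)
    have hmain := aux_main hf hα ht
    simp only [hq]
    exact ⟨hmain.1, hmain.2⟩
end

section
/- Let 1 < m, p < ∞ and let v be a weight on (0,∞). If there exists t > 0 with ∫₀^t v(s)s^{m/p}ds + ∫_t^∞ v(s)ds = ∞, then the space GΓ(p,m,v) contains only the zero function. -/
open MeasureTheory Set Filter
open scoped ENNReal

/-- Non-increasing rearrangement (of an `ℝ≥0∞`-valued function on `ℝⁿ`). -/
noncomputable def rearrE {n : ℕ} (f : EuclideanSpace ℝ (Fin n) → ℝ≥0∞) (t : ℝ) : ℝ≥0∞ :=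
  sInf {l : ℝ≥0∞ | volume {x | l < f x} ≤ ENNReal.ofReal t}

lemma rearrE_antitone {n : ℕ} (f : EuclideanSpace ℝ (Fin n) → ℝ≥0∞) :
    Antitone (rearrE f) := by
  intro a b hab
  exact sInf_le_sInf fun l hl => le_trans hl (ENNReal.ofReal_le_ofReal hab)

/-- If the finiteness requirement `∫₀^t v(s) s^{m/p} ds + ∫_t^∞ v(s) ds < ∞` fails for
some `t > 0`, then `GΓ(p,m,v)` contains only the zero function: every measurable `f`
not a.e. zero has infinite `GΓ(p,m,v)` norm. -/
theorem stmt17 (n : ℕ) (m p : ℝ) (hm : 1 < m) (hp : 1 < p)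
    (v : ℝ → ℝ≥0∞) (hv : Measurable v)
    (t : ℝ) (ht : 0 < t)
    (hdeg : (∫⁻ s in Set.Ioc 0 t, v s * ENNReal.ofReal s ^ (m/p))
              + (∫⁻ s in Set.Ioi t, v s) = ⊤) :
    ∀ f : EuclideanSpace ℝ (Fin n) → ℝ≥0∞, Measurable f →
      ¬ (f =ᵐ[volume] (fun _ => 0)) →
      (∫⁻ x in Set.Ioi 0,
          (∫⁻ τ in Set.Ioc 0 x, rearrE f τ ^ p) ^ (m/p) * v x) ^ (1/m) = ⊤ := by
  intro f hf hne
  have hp0 : (0:ℝ) < p := lt_trans one_pos hp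
  have hm0 : (0:ℝ) < m := lt_trans one_pos hm
  have hmp0 : (0:ℝ) ≤ m / p := le_of_lt (div_pos hm0 hp0)
  -- find a positive level with positive superlevel measure
  obtain ⟨ε, hε0, hεtop, hεμ⟩ :
      ∃ ε : ℝ≥0∞, 0 < ε ∧ ε ≠ ⊤ ∧ 0 < volume {x | ε < f x} := by
    by_contra h
    push_neg at h
    apply hne
    have hnull : volume {x | f x ≠ 0} = 0 := by
      have hsub : {x | f x ≠ 0} ⊆ ⋃ k : ℕ, {x | ((k : ℝ≥0∞))⁻¹ < f x} := by
        intro x hx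
        obtain ⟨k, hk⟩ := ENNReal.exists_inv_nat_lt hx
        exact Set.mem_iUnion.2 ⟨k, hk⟩
      refine measure_mono_null hsub (measure_iUnion_null fun k => ?_)
      rcases Nat.eq_zero_or_pos k with h0 | h0
      · simp [h0]
      · have hk0 : (0:ℝ≥0∞) < (k : ℝ≥0∞)⁻¹ := by
          simp [ENNReal.inv_pos]
        have hkt : ((k : ℝ≥0∞))⁻¹ ≠ ⊤ := by
          simp [h0.ne']
        exact le_antisymm (h _ hk0 hkt) zero_le
    refine (ae_iff).2 ?_
    simpa using hnull
  -- choose δ > 0 with ofReal δ < measure of superlevel set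
  obtain ⟨δ, hδ0, hδμ⟩ :
      ∃ δ : ℝ, 0 < δ ∧ ENNReal.ofReal δ < volume {x | ε < f x} := by
    rcases eq_top_or_lt_top (volume {x | ε < f x}) with h | h
    · exact ⟨1, one_pos, by simp [h]⟩
    · refine ⟨(volume {x | ε < f x}).toReal / 2, by
        have := ENNReal.toReal_pos hεμ.ne' h.ne
        linarith, ?_⟩
      rw [ENNReal.ofReal_lt_iff_lt_toReal (by positivity) h.ne]
      have := ENNReal.toReal_pos hεμ.ne' h.ne
      linarith
  -- lower bound for the rearrangement
  have rlow : ∀ τ : ℝ, ENNReal.ofReal τ < volume {x | ε < f x} → ε ≤ rearrE f τ := by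
    intro τ hτ
    refine le_sInf fun l hl => ?_
    by_contra hlt
    push_neg at hlt
    have hsub : {x | ε < f x} ⊆ {x | l < f x} := fun x hx => lt_trans hlt hx
    exact lt_irrefl _ (lt_of_lt_of_le hτ (le_trans (measure_mono hsub) hl))
  set d : ℝ := min t δ with hd
  have hd0 : 0 < d := lt_min ht hδ0
  have hdt : d ≤ t := min_le_left _ _
  have hdδ : d ≤ δ := min_le_right _ _
  have hpm : p * (m / p) = m := by field_simp
  -- pointwise key bound
  have key : ∀ x ∈ Set.Ioi (0:ℝ),
      ε ^ m * ENNReal.ofReal (min x d) ^ (m/p) * v x ≤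
      (∫⁻ τ in Set.Ioc 0 x, rearrE f τ ^ p) ^ (m/p) * v x := by
    intro x hx
    have h1 : ε ^ p * ENNReal.ofReal (min x d) ≤ ∫⁻ τ in Set.Ioc 0 x, rearrE f τ ^ p := by
      calc ε ^ p * ENNReal.ofReal (min x d)
          = ∫⁻ _ in Set.Ioc 0 (min x d), ε ^ p := by
            rw [setLIntegral_const, Real.volume_Ioc, sub_zero]
        _ ≤ ∫⁻ τ in Set.Ioc 0 (min x d), rearrE f τ ^ p := by
            refine setLIntegral_mono ((rearrE_antitone f).measurable.pow_const p)
              fun τ hτ => ?_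
            refine ENNReal.rpow_le_rpow ?_ (le_of_lt hp0)
            refine rlow τ (lt_of_le_of_lt ?_ hδμ)
            exact ENNReal.ofReal_le_ofReal (le_trans hτ.2 (le_trans (min_le_right _ _) hdδ))
        _ ≤ ∫⁻ τ in Set.Ioc 0 x, rearrE f τ ^ p :=
            lintegral_mono_set (Set.Ioc_subset_Ioc_right (min_le_left _ _))
    have h2 := ENNReal.rpow_le_rpow h1 hmp0
    rw [ENNReal.mul_rpow_of_nonneg _ _ hmp0, ← ENNReal.rpow_mul, hpm] at h2
    exact mul_le_mul_left h2 (v x)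
  -- measurability of the integrand
  have hinner_mono : Monotone fun x => ∫⁻ τ in Set.Ioc 0 x, rearrE f τ ^ p := by
    intro a b hab
    exact lintegral_mono_set (Set.Ioc_subset_Ioc_right hab)
  have hmeas : Measurable fun x =>
      (∫⁻ τ in Set.Ioc 0 x, rearrE f τ ^ p) ^ (m/p) * v x :=
    (hinner_mono.measurable.pow_const _).mul hv
  -- reduce to lower bound integral
  have hmain : (∫⁻ x in Set.Ioi 0,
      (∫⁻ τ in Set.Ioc 0 x, rearrE f τ ^ p) ^ (m/p) * v x) = ⊤ := by
    refine top_le_iff.1 ?_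
    have hle : (∫⁻ x in Set.Ioi (0:ℝ),
        ε ^ m * ENNReal.ofReal (min x d) ^ (m/p) * v x) ≤
        ∫⁻ x in Set.Ioi 0, (∫⁻ τ in Set.Ioc 0 x, rearrE f τ ^ p) ^ (m/p) * v x :=
      setLIntegral_mono hmeas key
    refine le_trans (le_of_eq ?_) hle
    -- show lower bound integral = ⊤
    have hεm : ε ^ m ≠ 0 := (ENNReal.rpow_pos hε0 hεtop).ne'
    have hcase : (∫⁻ s in Set.Ioc 0 d, v s * ENNReal.ofReal s ^ (m/p)) = ⊤ ∨
        (∫⁻ s in Set.Ioi d, v s) = ⊤ := by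
      rcases ENNReal.add_eq_top.1 hdeg with hA | hB
      · have hsplit : Set.Ioc (0:ℝ) t = Set.Ioc 0 d ∪ Set.Ioc d t :=
          (Set.Ioc_union_Ioc_eq_Ioc (le_of_lt hd0) hdt).symm
        rw [hsplit, lintegral_union measurableSet_Ioc (Set.Ioc_disjoint_Ioc_of_le le_rfl)] at hA
        rcases ENNReal.add_eq_top.1 hA with h1 | h2
        · exact Or.inl h1
        · right
          have hb : (∫⁻ s in Set.Ioc d t, v s * ENNReal.ofReal t ^ (m/p)) = ⊤ := by
            refine top_le_iff.1 (le_trans (le_of_eq h2.symm) ?_)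
            refine setLIntegral_mono (hv.mul measurable_const) fun s hs => ?_
            exact mul_le_mul_right (ENNReal.rpow_le_rpow
              (ENNReal.ofReal_le_ofReal hs.2) hmp0) _
          rw [lintegral_mul_const _ hv] at hb
          have hct : ENNReal.ofReal t ^ (m/p) ≠ ⊤ :=
            ENNReal.rpow_ne_top_of_nonneg hmp0 ENNReal.ofReal_ne_top
          have hvtop : (∫⁻ s in Set.Ioc d t, v s) = ⊤ := by
            by_contra hcon
            exact (ENNReal.mul_ne_top hcon hct) hb
          refine top_le_iff.1 (le_trans (le_of_eq hvtop.symm) ?_)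
          exact lintegral_mono_set Set.Ioc_subset_Ioi_self
      · refine Or.inr (top_le_iff.1 (le_trans (le_of_eq hB.symm) ?_))
        exact lintegral_mono_set fun x hx => lt_of_le_of_lt hdt hx
    symm
    rcases hcase with h1 | h2
    · refine top_le_iff.1 ?_
      have hsub : (∫⁻ x in Set.Ioc 0 d,
          ε ^ m * ENNReal.ofReal (min x d) ^ (m/p) * v x) = ⊤ := by
        have heq : ∀ x ∈ Set.Ioc (0:ℝ) d,
            ε ^ m * ENNReal.ofReal (min x d) ^ (m/p) * v x =
            ε ^ m * (v x * ENNReal.ofReal x ^ (m/p)) := by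
          intro x hx
          rw [min_eq_left hx.2]
          ring
        rw [setLIntegral_congr_fun measurableSet_Ioc heq,
          lintegral_const_mul _ (show Measurable fun x => v x * ENNReal.ofReal x ^ (m/p) from hv.mul (ENNReal.measurable_ofReal.pow_const _)), h1, ENNReal.mul_top hεm]
      refine le_trans (le_of_eq hsub.symm) ?_
      exact lintegral_mono_set fun x hx => hx.1
    · refine top_le_iff.1 ?_
      have hsub : (∫⁻ x in Set.Ioi d,
          ε ^ m * ENNReal.ofReal (min x d) ^ (m/p) * v x) = ⊤ := by
        have heq : ∀ x ∈ Set.Ioi d,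
            ε ^ m * ENNReal.ofReal (min x d) ^ (m/p) * v x =
            (ε ^ m * ENNReal.ofReal d ^ (m/p)) * v x := by
          intro x hx
          rw [min_eq_right (le_of_lt hx)]
        rw [setLIntegral_congr_fun measurableSet_Ioi heq,
          lintegral_const_mul _ hv, h2, ENNReal.mul_top]
        refine mul_ne_zero hεm ?_
        exact (ENNReal.rpow_pos (ENNReal.ofReal_pos.2 hd0) ENNReal.ofReal_ne_top).ne'
      refine le_trans (le_of_eq hsub.symm) ?_
      exact lintegral_mono_set fun x hx => lt_trans hd0 hx
  rw [hmain]
  exact ENNReal.top_rpow_of_pos (by positivity)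
end
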